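/- arXiv:2304.02943 — 10 statements merged into one kernel-verified Lean document; each statement's English description precedes it below -/
import Mathlib

section
/- Let 𝔽 be a finite field and let k, n, d be positive integers with |𝔽|^d ≥ n^5 and k·n^{-3} + k^2·n^{-1} < 1. Let V be a finite set partitioned into k disjoint parts V_1, …, V_k, each of size n. Then there exists a function H : V → 𝔽^d such that: (i) for every i ∈ [k] and all distinct v, v' ∈ V_i, H(v) ≠ H(v'); and (ii) for all distinct i, j ∈ [k] and all pairs (v_i, v_j), (v_i', v_j') ∈ V_i × V_j with (v_i, v_j) ≠ (v_i', v_j'), H(v_i) + H(v_j) ≠ H(v_i') + H(v_j'). -/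
/-!
Any injection of `V` into a weak Sidon set of `𝔽^d` (one in
which the sums `a + b` of distinct elements determine `{a, b}`) works, because two vertices from
different parts are always distinct. A weak Sidon set of size `m` is built greedily: a set `S` can
be extended by any `x` avoiding the `|S| + |S|^3` elements of `S ∪ {b + c - a}`, so size `m` is
reached as soon as `m^3 ≤ |𝔽^d|`. The hypothesis `k/n³ + k²/n < 1` forces `k² < n`, whence
`|V|^3 ≤ (kn)^3 ≤ n^5 ≤ |𝔽|^d`.
-/

open Finset

namespace Finset

variable {G : Type*} [AddCommGroup G]

/-- Only sums of distinct elements are compared: in characteristic `2` all `a + a` coincide. -/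
def IsWeakSidon (S : Finset G) : Prop :=
  ∀ a ∈ S, ∀ b ∈ S, ∀ c ∈ S, ∀ e ∈ S, a ≠ b → c ≠ e → a + b = c + e →
    (a = c ∧ b = e) ∨ (a = e ∧ b = c)

theorem isWeakSidon_empty : (∅ : Finset G).IsWeakSidon := by
  simp [IsWeakSidon]

theorem isWeakSidon_insert [DecidableEq G] {S : Finset G} (hS : S.IsWeakSidon) {x : G}
    (hxS : x ∉ S) (hx : ∀ a ∈ S, ∀ b ∈ S, ∀ c ∈ S, x + a ≠ b + c) :
    (insert x S).IsWeakSidon := by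
  intro a ha b hb c hc e he hab hce h
  rw [mem_insert] at ha hb hc he
  -- A case with one `x` contradicts `hx`; in a case with two, `x` cancels.
  rcases ha with rfl | ha <;> rcases hb with rfl | hb <;>
    rcases hc with rfl | hc <;> rcases he with rfl | he
  all_goals first
    | exact hS a ha b hb c hc e he hab hce h
    | grind

theorem IsWeakSidon.exists_insert [Fintype G] [DecidableEq G] {S : Finset G}
    (hS : S.IsWeakSidon) (hcard : #S ^ 3 + #S < Fintype.card G) :
    ∃ x ∉ S, (insert x S).IsWeakSidon := by
  set forbidden := S ∪ (S ×ˢ S ×ˢ S).image (fun p ↦ p.2.1 + p.2.2 - p.1)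
  have hforbidden : #forbidden < #(univ : Finset G) :=
    calc #forbidden ≤ #S + #(S ×ˢ S ×ˢ S) :=
          (card_union_le _ _).trans (add_le_add le_rfl card_image_le)
      _ = #S ^ 3 + #S := by simp only [card_product]; ring
      _ < #(univ : Finset G) := hcard
  obtain ⟨x, -, hx⟩ := exists_mem_notMem_of_card_lt_card hforbidden
  have hxS : x ∉ S := fun h ↦ hx (mem_union_left _ h)
  refine ⟨x, hxS, isWeakSidon_insert hS hxS fun a ha b hb c hc h ↦ ?_⟩
  exact hx <| mem_union_right _ <|
    mem_image.2 ⟨(a, b, c), by simp [ha, hb, hc], by rw [← h]; abel⟩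

theorem exists_isWeakSidon_card [Fintype G] (m : ℕ) (hm : m ^ 3 ≤ Fintype.card G) :
    ∃ S : Finset G, #S = m ∧ S.IsWeakSidon := by
  classical
  induction m with
  | zero => exact ⟨∅, card_empty, isWeakSidon_empty⟩
  | succ m ih =>
    obtain ⟨S, rfl, hS⟩ := ih (le_trans (Nat.pow_le_pow_left m.le_succ 3) hm)
    obtain ⟨x, hxS, hx⟩ := hS.exists_insert (by nlinarith)
    exact ⟨insert x S, card_insert_of_notMem hxS, hx⟩

end Finset

open Function in
theorem exists_injective_weakSidon {V G : Type*} [Fintype V] [AddCommGroup G] [Fintype G]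
    (h : Fintype.card V ^ 3 ≤ Fintype.card G) :
    ∃ H : V → G, Injective H ∧ ∀ a b c e : V, a ≠ b → c ≠ e → H a + H b = H c + H e →
      (a = c ∧ b = e) ∨ (a = e ∧ b = c) := by
  obtain ⟨S, hS, hSidon⟩ := exists_isWeakSidon_card (Fintype.card V) h
  let E : V ≃ S := Fintype.equivOfCardEq (by rw [Fintype.card_coe, hS])
  have hinj : Injective (fun v ↦ (E v : G)) := Subtype.val_injective.comp E.injective
  refine ⟨fun v ↦ E v, hinj, fun a b c e hab hce h ↦ ?_⟩
  simpa only [hinj.eq_iff] using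
    hSidon _ (E a).2 _ (E b).2 _ (E c).2 _ (E e).2 (hinj.ne hab) (hinj.ne hce) h

theorem Fintype.card_le_card_mul_of_cover {V ι : Type*} [Fintype V] [Fintype ι]
    (parts : ι → Finset V) (hcover : ∀ v, ∃ i, v ∈ parts i) {n : ℕ}
    (hsize : ∀ i, #(parts i) = n) :
    Fintype.card V ≤ Fintype.card ι * n := by
  classical
  calc Fintype.card V = #(univ.biUnion parts) := by
        rw [← card_univ]; congr; ext v; simpa using hcover v
    _ ≤ #(univ : Finset ι) * n := card_biUnion_le_card_mul _ _ _ fun i _ ↦ (hsize i).le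

theorem mul_pow_three_le_pow_five {k n : ℕ} (h : k ^ 2 < n) : (k * n) ^ 3 ≤ n ^ 5 := by
  have hk : k ^ 3 ≤ n ^ 2 :=
    calc k ^ 3 ≤ (k ^ 2) ^ 2 := by
          rw [← pow_mul]
          rcases k.eq_zero_or_pos with rfl | hk
          · simp
          · exact Nat.pow_le_pow_right hk (by norm_num)
      _ ≤ n ^ 2 := Nat.pow_le_pow_left h.le 2
  calc (k * n) ^ 3 = k ^ 3 * n ^ 3 := mul_pow k n 3
    _ ≤ n ^ 2 * n ^ 3 := Nat.mul_le_mul_right _ hk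
    _ = n ^ 5 := by ring

theorem stmt_0_general {𝔽 V : Type} [Field 𝔽] [Fintype 𝔽] [Fintype V]
    (k n d : ℕ) (hn : 0 < n)
    (hcard : n ^ 5 ≤ (Fintype.card 𝔽) ^ d)
    (hprob : (k : ℝ) / (n : ℝ) ^ 3 + (k : ℝ) ^ 2 / (n : ℝ) < 1)
    (parts : Fin k → Finset V)
    (hdisj : ∀ i j : Fin k, i ≠ j → Disjoint (parts i) (parts j))
    (hcover : ∀ v : V, ∃ i : Fin k, v ∈ parts i)
    (hsize : ∀ i : Fin k, (parts i).card = n) :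
    ∃ H : V → (Fin d → 𝔽),
      (∀ i : Fin k, ∀ v ∈ parts i, ∀ v' ∈ parts i, v ≠ v' → H v ≠ H v') ∧
      (∀ i j : Fin k, i ≠ j →
        ∀ vi ∈ parts i, ∀ vj ∈ parts j, ∀ vi' ∈ parts i, ∀ vj' ∈ parts j,
          (vi, vj) ≠ (vi', vj') → H vi + H vj ≠ H vi' + H vj') := by
  have hkn : k ^ 2 < n := by
    have : (k : ℝ) ^ 2 / n < 1 := by linarith [show 0 ≤ (k : ℝ) / n ^ 3 by positivity]
    exact_mod_cast (div_lt_one (by positivity)).1 this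
  have hV : Fintype.card V ^ 3 ≤ Fintype.card (Fin d → 𝔽) := by
    have := Fintype.card_le_card_mul_of_cover parts hcover hsize
    rw [Fintype.card_fin] at this
    calc Fintype.card V ^ 3 ≤ (k * n) ^ 3 := Nat.pow_le_pow_left this 3
      _ ≤ n ^ 5 := mul_pow_three_le_pow_five hkn
      _ ≤ Fintype.card (Fin d → 𝔽) := by simpa using hcard
  obtain ⟨H, hinj, hSidon⟩ := exists_injective_weakSidon hV
  have hne {i j : Fin k} (hij : i ≠ j) {v w : V} (hv : v ∈ parts i) (hw : w ∈ parts j) : v ≠ w :=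
    fun h ↦ disjoint_left.1 (hdisj i j hij) hv (h ▸ hw)
  refine ⟨H, fun _ _ _ _ _ ↦ hinj.ne, fun i j hij vi hvi vj hvj vi' hvi' vj' hvj' hpair h ↦ ?_⟩
  obtain ⟨rfl, rfl⟩ | ⟨rfl, -⟩ :=
    hSidon vi vj vi' vj' (hne hij hvi hvj) (hne hij hvi' hvj') h
  exacts [hpair rfl, hne hij hvi hvj' rfl]

/-- existence of a "pairwise-sum distinguishing" hash function
`H : V → 𝔽^d` for a vertex set `V` partitioned into `k` parts of size `n`,
provided `|𝔽|^d ≥ n^5` and `k/n³ + k²/n < 1`. -/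
theorem stmt_0 {𝔽 V : Type} [Field 𝔽] [Fintype 𝔽] [Fintype V] [DecidableEq V]
    (k n d : ℕ) (hk : 0 < k) (hn : 0 < n) (hd : 0 < d)
    (hcard : n ^ 5 ≤ (Fintype.card 𝔽) ^ d)
    (hprob : (k : ℝ) / (n : ℝ) ^ 3 + (k : ℝ) ^ 2 / (n : ℝ) < 1)
    (parts : Fin k → Finset V)
    (hdisj : ∀ i j : Fin k, i ≠ j → Disjoint (parts i) (parts j))
    (hcover : ∀ v : V, ∃ i : Fin k, v ∈ parts i)
    (hsize : ∀ i : Fin k, (parts i).card = n) :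
    ∃ H : V → (Fin d → 𝔽),
      (∀ i : Fin k, ∀ v ∈ parts i, ∀ v' ∈ parts i, v ≠ v' → H v ≠ H v') ∧
      (∀ i j : Fin k, i ≠ j →
        ∀ vi ∈ parts i, ∀ vj ∈ parts j, ∀ vi' ∈ parts i, ∀ vj' ∈ parts j,
          (vi, vj) ≠ (vi', vj') → H vi + H vj ≠ H vi' + H vj') :=
  stmt_0_general k n d hn hcard hprob parts hdisj hcover hsize
end

section
/- Let 𝔽 be a field, d and k positive integers, and let G be a simple graph whose vertex set V is partitioned into k disjoint parts V_1, …, V_k, each of which is an independent set of G. Suppose H : V → 𝔽^d satisfies: (i) for every i ∈ [k] and all distinct v, v' ∈ V_i, H(v) ≠ H(v'); and (ii) for all distinct i, j ∈ [k] and all pairs (v_i, v_j), (v_i', v_j') ∈ V_i × V_j with (v_i, v_j) ≠ (v_i', v_j'), H(v_i) + H(v_j) ≠ H(v_i') + H(v_j'). Define T_i = {H(v) : v ∈ V_i} for each i ∈ [k], and U_{i,j} = {H(u) + H(w) : u ∈ V_i, w ∈ V_j, {u,w} an edge of G} for each 1 ≤ i < j ≤ k. Then there exist x_1, …, x_k ∈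 𝔽^d with x_i ∈ T_i for every i ∈ [k] and x_i + x_j ∈ U_{i,j} for all 1 ≤ i < j ≤ k, if and only if G contains vertices v_1 ∈ V_1, …, v_k ∈ V_k that form a clique of size k. -/
/-!
A satisfying assignment picks `x i = H (v i)` with `v i ∈ V_i`, and `x i + x j` must be the hash
sum of an edge `{u, w}` with `u ∈ V_i`, `w ∈ V_j`. Since `(a, b) ↦ H a + H b` is injective on
`V_i × V_j`, that edge is `{v i, v j}`, so the `v i` form a clique; conversely, the hashes of a
multicolored clique satisfy every constraint.
-/

namespace SimpleGraph

variable {ι V M : Type*} [Add M]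

/-- The constraint set `U_{i,j}` of the reduction. -/
def edgeHashSums (G : SimpleGraph V) (parts : ι → Set V) (H : V → M) (i j : ι) : Set M :=
  {z | ∃ u ∈ parts i, ∃ w ∈ parts j, G.Adj u w ∧ z = H u + H w}

theorem adj_of_add_mem_edgeHashSums {G : SimpleGraph V} {parts : ι → Set V} {H : V → M}
    {i j : ι} (hinj : Set.InjOn (fun p : V × V => H p.1 + H p.2) (parts i ×ˢ parts j))
    {a b : V} (ha : a ∈ parts i) (hb : b ∈ parts j)
    (hab : H a + H b ∈ G.edgeHashSums parts H i j) : G.Adj a b := by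
  obtain ⟨u, hu, w, hw, huw, hsum⟩ := hab
  obtain ⟨rfl, rfl⟩ :=
    Prod.ext_iff.mp (hinj (Set.mk_mem_prod ha hb) (Set.mk_mem_prod hu hw) hsum)
  exact huw

theorem exists_hash_assignment_iff_exists_clique [LinearOrder ι] (G : SimpleGraph V)
    (parts : ι → Set V) (H : V → M) (hinj : ∀ i j, i < j →
      Set.InjOn (fun p : V × V => H p.1 + H p.2) (parts i ×ˢ parts j)) :
    (∃ x : ι → M, (∀ i, x i ∈ H '' parts i) ∧
        ∀ i j, i < j → x i + x j ∈ G.edgeHashSums parts H i j) ↔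
      ∃ v : ι → V, (∀ i, v i ∈ parts i) ∧ ∀ i j, i ≠ j → G.Adj (v i) (v j) := by
  constructor
  · rintro ⟨x, hxT, hxU⟩
    choose v hv hvx using hxT
    have hlt : ∀ i j, i < j → G.Adj (v i) (v j) := fun i j hij =>
      adj_of_add_mem_edgeHashSums (hinj i j hij) (hv i) (hv j) (hvx i ▸ hvx j ▸ hxU i j hij)
    refine ⟨v, hv, fun i j hij => ?_⟩
    rcases hij.lt_or_gt with h | h
    · exact hlt i j h
    · exact (hlt j i h).symm
  · rintro ⟨v, hv, hadj⟩
    exact ⟨fun i => H (v i), fun i => ⟨v i, hv i, rfl⟩,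
      fun i j hij => ⟨v i, hv i, v j, hv j, hadj i j hij.ne, rfl⟩⟩

end SimpleGraph

theorem stmt_1_general {𝔽 V : Type} [Field 𝔽]
    (d k : ℕ)
    (G : SimpleGraph V)
    (parts : Fin k → Finset V)
    (H : V → (Fin d → 𝔽))
    (h2 : ∀ i j : Fin k, i ≠ j →
      ∀ vi ∈ parts i, ∀ vj ∈ parts j, ∀ vi' ∈ parts i, ∀ vj' ∈ parts j,
        (vi, vj) ≠ (vi', vj') → H vi + H vj ≠ H vi' + H vj')
    (T : Fin k → Set (Fin d → 𝔽))
    (hT : ∀ i : Fin k, T i = H '' (parts i : Set V))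
    (U : Fin k → Fin k → Set (Fin d → 𝔽))
    (hU : ∀ i j : Fin k, i < j →
      U i j = {z | ∃ u ∈ parts i, ∃ w ∈ parts j, G.Adj u w ∧ z = H u + H w}) :
    (∃ x : Fin k → (Fin d → 𝔽),
        (∀ i : Fin k, x i ∈ T i) ∧ ∀ i j : Fin k, i < j → x i + x j ∈ U i j) ↔
    (∃ v : Fin k → V,
        (∀ i : Fin k, v i ∈ parts i) ∧ ∀ i j : Fin k, i ≠ j → G.Adj (v i) (v j)) := by
  have hinj : ∀ i j, i < j → Set.InjOn (fun p : V × V => H p.1 + H p.2)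
      ((parts i : Set V) ×ˢ (parts j : Set V)) :=
    fun i j hij p hp q hq hpq =>
      by_contra fun hne => h2 i j hij.ne _ hp.1 _ hp.2 _ hq.1 _ hq.2 hne hpq
  refine Iff.trans ?_ (G.exists_hash_assignment_iff_exists_clique (fun i => parts i) H hinj)
  refine exists_congr fun x => and_congr (forall_congr' fun i => by rw [hT]) ?_
  exact forall₂_congr fun i j => imp_congr_right fun hij => by rw [hU i j hij]; rfl

/-- the vector 2CSP instance built from a partitioned clique
instance via a distinguishing hash `H` is satisfiable iff the graph contains
a multicolored `k`-clique. -/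
theorem stmt_1 {𝔽 V : Type} [Field 𝔽] [Fintype V] [DecidableEq V]
    (d k : ℕ) (hd : 0 < d) (hk : 0 < k)
    (G : SimpleGraph V)
    (parts : Fin k → Finset V)
    (hdisj : ∀ i j : Fin k, i ≠ j → Disjoint (parts i) (parts j))
    (hcover : ∀ v : V, ∃ i : Fin k, v ∈ parts i)
    (hindep : ∀ i : Fin k, ∀ v ∈ parts i, ∀ w ∈ parts i, ¬ G.Adj v w)
    (H : V → (Fin d → 𝔽))
    (h1 : ∀ i : Fin k, ∀ v ∈ parts i, ∀ v' ∈ parts i, v ≠ v' → H v ≠ H v')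
    (h2 : ∀ i j : Fin k, i ≠ j →
      ∀ vi ∈ parts i, ∀ vj ∈ parts j, ∀ vi' ∈ parts i, ∀ vj' ∈ parts j,
        (vi, vj) ≠ (vi', vj') → H vi + H vj ≠ H vi' + H vj')
    (T : Fin k → Set (Fin d → 𝔽))
    (hT : ∀ i : Fin k, T i = H '' (parts i : Set V))
    (U : Fin k → Fin k → Set (Fin d → 𝔽))
    (hU : ∀ i j : Fin k, i < j →
      U i j = {z | ∃ u ∈ parts i, ∃ w ∈ parts j, G.Adj u w ∧ z = H u + H w}) :
    (∃ x : Fin k → (Fin d → 𝔽),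
        (∀ i : Fin k, x i ∈ T i) ∧ ∀ i j : Fin k, i < j → x i + x j ∈ U i j) ↔
    (∃ v : Fin k → V,
        (∀ i : Fin k, v i ∈ parts i) ∧ ∀ i j : Fin k, i ≠ j → G.Adj (v i) (v j)) :=
  stmt_1_general d k G parts H h2 T hT U hU
end

section
/- Let Σ₁, Σ₂ be finite alphabets with Σ₁ nonempty and |Σ₂| ≥ 2, let k, n, q be positive integers, C : Σ₁^k → Σ₂^n injective, and let δ, ε_T, ε_D ∈ (0,1) with n > 1/δ. Suppose: (local tester) there are a finite nonempty set R_T, a map var assigning to each r ∈ R_T a set var(r) ⊆ [n] of size q, and for each r ∈ R_T a set A_r of functions var(r) → Σ₂, such that for every codeword c ∈ Im(C) and every r ∈ R_T the restriction of c to var(r) lies in A_r, and for every w ∈ Σ₂^n, if the fraction of r ∈ R_T whose restriction of w to var(r) lies in A_r is at least ε_T, then Δ(w, Im(C)) ≤ δ; (local decoders) for every i ∈ [k] there exist a finite nonempty set R, maps a_1, a_2 : R → [n], and maps D_r : Σ₂ × Σ₂ → Σ₁ for r ∈ R, such that for every m ∈ Σ₁^k and every r ∈ R, D_r(C(m)[a_1(r)],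 C(m)[a_2(r)]) = m[i], and for every m ∈ Σ₁^k and every w ∈ Σ₂^n with Δ(w, C(m)) ≤ 5δ, the fraction of r ∈ R with D_r(w[a_1(r)], w[a_2(r)]) = m[i] is at least ε_D. Then for every subset I ⊆ R_T with |I| ≥ ε_T·|R_T|, the union ⋃_{r∈I} var(r) has size at least (1−2δ)·n. -/
/-
If the queries of `I` covered fewer than `(1 - 2δ) n` positions, one could corrupt a codeword
`C m` in slightly more than `δ n` (but fewer than `2 δ n`) positions outside them. Every test in
`I` still accepts the corrupted word `w`, so soundness of the tester yields a codeword `C m'`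
within `δ` of `w`, hence within `3 δ` of `C m`. The local decoders then force `m' = m`:
decoding `C m` as a corruption of `C m'` succeeds with positive probability, while perfect
completeness says every decoder returns the symbols of `m`. But `w` is farther than `δ` from `C m`.
-/

noncomputable def relHamming {n : ℕ} {α : Type} (u v : Fin n → α) : ℝ :=
  (Nat.card {i : Fin n // u i ≠ v i} : ℝ) / n

open Finset

theorem relHamming_eq_hammingDist {n : ℕ} {α : Type} [DecidableEq α] (u v : Fin n → α) :
    relHamming u v = hammingDist u v / n := by
  rw [relHamming, Nat.card_eq_fintype_card, Fintype.card_subtype]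
  rfl

theorem relHamming_triangle_left {n : ℕ} {α : Type} (u v w : Fin n → α) :
    relHamming u v ≤ relHamming w u + relHamming w v := by
  classical
  simp only [relHamming_eq_hammingDist, ← add_div]
  gcongr
  exact_mod_cast hammingDist_triangle_left u v w

theorem exists_eqOn_hammingDist_eq {ι β : Type} [Fintype ι] [DecidableEq ι] [DecidableEq β]
    [Nontrivial β] (c : ι → β) (U : Finset ι) {s : ℕ} (hs : s + #U ≤ Fintype.card ι) :
    ∃ w : ι → β, Set.EqOn w c U ∧ hammingDist w c = s := by
  obtain ⟨S, hSU, hScard⟩ := exists_subset_card_eq (s := Uᶜ) (n := s) (by rw [card_compl]; omega)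
  refine ⟨fun i => if i ∈ S then (exists_ne (c i)).choose else c i, fun i hi => ?_, ?_⟩
  · have hiS : i ∉ S := fun h => mem_compl.mp (hSU h) hi
    simp only [hiS, if_false]
  · rw [← hScard, hammingDist]
    congr 1
    ext i
    by_cases hiS : i ∈ S <;> simp [hiS, (exists_ne (c i)).choose_spec]

theorem exists_nat_gt_lt_two_mul {x : ℝ} (hx : 1 < x) : ∃ s : ℕ, x < s ∧ (s : ℝ) < 2 * x :=
  ⟨⌊x⌋₊ + 1, by exact_mod_cast Nat.lt_floor_add_one x, by
    push_cast
    linarith [Nat.floor_le (zero_le_one.trans hx.le)]⟩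

theorem exists_relHamming_le_of_eqOn_biUnion {k n : ℕ} {α β RT : Type} [Fintype RT]
    [Nonempty RT] {C : (Fin k → α) → Fin n → β} {var : RT → Finset (Fin n)}
    {Acc : (r : RT) → Set ({i : Fin n // i ∈ var r} → β)} {δ εT : ℝ}
    (htest_complete : ∀ (m : Fin k → α) (r : RT),
      (fun i : {i : Fin n // i ∈ var r} => C m i.1) ∈ Acc r)
    (htest_sound : ∀ w : Fin n → β,
      (Nat.card {r : RT // (fun i : {i : Fin n // i ∈ var r} => w i.1) ∈ Acc r} : ℝ)
          / Fintype.card RT ≥ εT →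
      ∃ m : Fin k → α, relHamming w (C m) ≤ δ)
    {I : Finset RT} (hI : (#I : ℝ) ≥ εT * Fintype.card RT) {m : Fin k → α} {w : Fin n → β}
    (hw : Set.EqOn w (C m) (I.biUnion var)) :
    ∃ m' : Fin k → α, relHamming w (C m') ≤ δ := by
  classical
  refine htest_sound w ?_
  have haccept : ∀ r ∈ I, (fun i : {i : Fin n // i ∈ var r} => w i.1) ∈ Acc r := fun r hr => by
    convert htest_complete m r using 2 with i
    exact hw (mem_coe.mpr (mem_biUnion.mpr ⟨r, hr, i.2⟩))
  have hcard : #I ≤ Nat.card {r : RT // (fun i : {i : Fin n // i ∈ var r} => w i.1) ∈ Acc r} := by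
    rw [Nat.card_eq_fintype_card, Fintype.card_subtype]
    exact card_le_card fun r hr => mem_filter.mpr ⟨mem_univ r, haccept r hr⟩
  rw [ge_iff_le, le_div_iff₀ (by exact_mod_cast Fintype.card_pos)]
  exact hI.trans (by exact_mod_cast hcard)

theorem apply_eq_of_relHamming_le_of_decoder {k n : ℕ} {α β R : Type}
    {C : (Fin k → α) → Fin n → β} (a₁ a₂ : R → Fin n) (D : R → β → β → α) {i : Fin k}
    {ρ ε : ℝ} (hε : 0 < ε)
    (hcomplete : ∀ (m : Fin k → α) (r : R), D r (C m (a₁ r)) (C m (a₂ r)) = m i)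
    (hsound : ∀ (m : Fin k → α) (w : Fin n → β), relHamming w (C m) ≤ ρ →
      (Nat.card {r : R // D r (w (a₁ r)) (w (a₂ r)) = m i} : ℝ) / Nat.card R ≥ ε)
    {m m' : Fin k → α} (h : relHamming (C m) (C m') ≤ ρ) : m i = m' i := by
  have hpos : 0 < Nat.card {r : R // D r (C m (a₁ r)) (C m (a₂ r)) = m' i} := by
    by_contra! h0
    have := hsound m' (C m) h
    simp only [Nat.le_zero.mp h0, CharP.cast_eq_zero, zero_div] at this
    linarith
  obtain ⟨r, hr⟩ := (Nat.card_pos_iff.mp hpos).1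
  exact (hcomplete m r).symm.trans hr
theorem stmt_3_general {α β : Type} [Fintype β] [Nonempty α]
    (hβ : 2 ≤ Fintype.card β)
    (k n : ℕ)
    (C : (Fin k → α) → (Fin n → β))
    (δ εT εD : ℝ) (hδ : 0 < δ ∧ δ < 1) (hεD : 0 < εD ∧ εD < 1)
    (hnδ : (n : ℝ) > 1 / δ)
    -- local tester
    (RT : Type) [Fintype RT] [Nonempty RT]
    (var : RT → Finset (Fin n))
    (Acc : (r : RT) → Set ({i : Fin n // i ∈ var r} → β))
    (htest_complete : ∀ (m : Fin k → α) (r : RT),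
      (fun i : {i : Fin n // i ∈ var r} => C m i.1) ∈ Acc r)
    (htest_sound : ∀ w : Fin n → β,
      (Nat.card {r : RT // (fun i : {i : Fin n // i ∈ var r} => w i.1) ∈ Acc r} : ℝ)
          / Fintype.card RT ≥ εT →
      ∃ m : Fin k → α, relHamming w (C m) ≤ δ)
    -- local decoders
    (hdec : ∀ i : Fin k, ∃ (R : Type) (_ : Fintype R), Nonempty R ∧
      ∃ (a₁ a₂ : R → Fin n) (D : R → β → β → α),
        (∀ (m : Fin k → α) (r : R), D r (C m (a₁ r)) (C m (a₂ r)) = m i) ∧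
        (∀ (m : Fin k → α) (w : Fin n → β), relHamming w (C m) ≤ 5 * δ →
          (Nat.card {r : R // D r (w (a₁ r)) (w (a₂ r)) = m i} : ℝ) / Nat.card R ≥ εD)) :
    ∀ I : Finset RT, (I.card : ℝ) ≥ εT * Fintype.card RT →
      ((I.biUnion var).card : ℝ) ≥ (1 - 2 * δ) * n := by
  classical
  intro I hI
  by_contra! hU
  have hδn : 1 < δ * n := by rwa [gt_iff_lt, div_lt_iff₀ hδ.1, mul_comm] at hnδ
  have hn : (0 : ℝ) < n := pos_of_mul_pos_right (one_pos.trans hδn) hδ.1.le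
  obtain ⟨s, hs_gt, hs_lt⟩ := exists_nat_gt_lt_two_mul hδn
  obtain ⟨m⟩ : Nonempty (Fin k → α) := inferInstance
  have : Nontrivial β := Fintype.one_lt_card_iff_nontrivial.mp hβ
  obtain ⟨w, hwU, hws⟩ := exists_eqOn_hammingDist_eq (C m) (I.biUnion var) (s := s) (by
    rw [Fintype.card_fin]
    exact_mod_cast (show (s : ℝ) + #(I.biUnion var) < n by linarith).le)
  have hwm : relHamming w (C m) = s / n := by rw [relHamming_eq_hammingDist, hws]
  obtain ⟨m', hm'⟩ := exists_relHamming_le_of_eqOn_biUnion htest_complete htest_sound hI hwU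
  have hmm' : m = m' := funext fun i => by
    obtain ⟨R, -, -, a₁, a₂, D, hcomplete, hsound⟩ := hdec i
    refine apply_eq_of_relHamming_le_of_decoder a₁ a₂ D hεD.1 hcomplete hsound ?_
    calc relHamming (C m) (C m') ≤ relHamming w (C m) + relHamming w (C m') :=
          relHamming_triangle_left _ _ _
      _ ≤ 2 * δ + δ := by
          gcongr
          rw [hwm, div_le_iff₀ hn]
          linarith
      _ ≤ 5 * δ := by linarith [hδ.1]
  rw [← hmm', hwm, div_le_iff₀ hn] at hm'
  linarith

/-- for a code that is locally testable (with query sets `var r`)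
and 2-query locally decodable, any set `I` of at least an `ε_T` fraction of the
tester's random strings must query at least a `(1 − 2δ)` fraction of the
positions. -/
theorem stmt_3 {α β : Type} [Fintype α] [Fintype β] [Nonempty α]
    (hβ : 2 ≤ Fintype.card β)
    (k n q : ℕ) (hk : 0 < k) (hn : 0 < n) (hq : 0 < q)
    (C : (Fin k → α) → (Fin n → β)) (hC : Function.Injective C)
    (δ εT εD : ℝ) (hδ : 0 < δ ∧ δ < 1) (hεT : 0 < εT ∧ εT < 1) (hεD : 0 < εD ∧ εD < 1)
    (hnδ : (n : ℝ) > 1 / δ)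
    -- local tester
    (RT : Type) [Fintype RT] [Nonempty RT]
    (var : RT → Finset (Fin n)) (hvarcard : ∀ r : RT, (var r).card = q)
    (Acc : (r : RT) → Set ({i : Fin n // i ∈ var r} → β))
    (htest_complete : ∀ (m : Fin k → α) (r : RT),
      (fun i : {i : Fin n // i ∈ var r} => C m i.1) ∈ Acc r)
    (htest_sound : ∀ w : Fin n → β,
      (Nat.card {r : RT // (fun i : {i : Fin n // i ∈ var r} => w i.1) ∈ Acc r} : ℝ)
          / Fintype.card RT ≥ εT →
      ∃ m : Fin k → α, relHamming w (C m) ≤ δ)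
    -- local decoders
    (hdec : ∀ i : Fin k, ∃ (R : Type) (_ : Fintype R), Nonempty R ∧
      ∃ (a₁ a₂ : R → Fin n) (D : R → β → β → α),
        (∀ (m : Fin k → α) (r : R), D r (C m (a₁ r)) (C m (a₂ r)) = m i) ∧
        (∀ (m : Fin k → α) (w : Fin n → β), relHamming w (C m) ≤ 5 * δ →
          (Nat.card {r : R // D r (w (a₁ r)) (w (a₂ r)) = m i} : ℝ) / Nat.card R ≥ εD)) :
    ∀ I : Finset RT, (I.card : ℝ) ≥ εT * Fintype.card RT →
      ((I.biUnion var).card : ℝ) ≥ (1 - 2 * δ) * n :=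
  stmt_3_general hβ k n C δ εT εD hδ hεD hnδ RT var Acc htest_complete htest_sound hdec
end

section
/- Let G be a simple graph whose vertex set is partitioned into k disjoint parts V_1, …, V_k, each an independent set. Let r ≥ 2 and s be positive integers, and let I_1, …, I_m ⊆ [k] be pairwise distinct subsets, each of size ℓ, such that the union of any r distinct subsets among them has size at least s. Define a simple graph G' whose vertex set is the disjoint union of parts V'_1, …, V'_m, where V'_i consists of all tuples (u_j)_{j ∈ I_i} with u_j ∈ V_j for each j ∈ I_i, and where two distinct tuples are adjacent in G' if and only if the set of all G-vertices appearing in the two tuples is a clique in G. Then: (i) if G contains vertices v_1 ∈ V_1, …, v_k ∈ V_k forming a clique of size k, then G' contains a clique of size m with exactly one vertex in each part V'_i; and (ii) if G' contains a clique of size r, then G contains a clique of size at least s. -/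
/-!
Completeness: restricting a multicolored `k`-clique `(v_j)` of `G` to each index set `I_i`
gives tuples that pairwise span subsets of that clique.

Soundness: two distinct tuples of the same part differ in some coordinate `j`, and both
entries lie in the independent set `V_j`, so they cannot span a clique; hence an `r`-clique
of `G'` uses `r` distinct index sets, whose union has at least `s` elements. Since `r ≥ 2`,
all `G`-vertices of its tuples together form a clique of `G`, and it meets `V_j` for every
`j` in that union.
-/

/-- The vertex type of the disperser product graph: a part index `i ∈ [m]`
together with a tuple `(u_j)_{j ∈ I_i}` where `u_j ∈ V_j`. -/
def DispVert {V : Type} {k m : ℕ} (parts : Fin k → Finset V)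
    (I : Fin m → Finset (Fin k)) : Type :=
  (i : Fin m) × ((j : {j : Fin k // j ∈ I i}) → {v : V // v ∈ parts j.1})

/-- The set of `G`-vertices appearing in a tuple. -/
def DispVert.verts {V : Type} {k m : ℕ} {parts : Fin k → Finset V}
    {I : Fin m → Finset (Fin k)} (x : DispVert parts I) : Set V :=
  Set.range fun j => (x.2 j).1

open Finset

theorem Finset.card_le_card_of_forall_inter_nonempty {α β : Type*} [DecidableEq α]
    {p : β → Finset α} {U : Finset β} (hp : (U : Set β).PairwiseDisjoint p)
    {t : Finset α} (h : ∀ j ∈ U, (t ∩ p j).Nonempty) : #U ≤ #t :=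
  calc #U = ∑ _j ∈ U, 1 := card_eq_sum_ones U
    _ ≤ ∑ j ∈ U, #(t ∩ p j) := sum_le_sum fun j hj => (h j hj).card_pos
    _ = #(U.biUnion fun j => t ∩ p j) :=
      (card_biUnion fun _ hi _ hj hij =>
        (hp hi hj hij).mono inter_subset_right inter_subset_right).symm
    _ ≤ #t := card_le_card (biUnion_subset.2 fun _ _ => inter_subset_left)

namespace DispVert

variable {V : Type} {k m : ℕ} {parts : Fin k → Finset V} {I : Fin m → Finset (Fin k)}

def product (G : SimpleGraph V) (parts : Fin k → Finset V) (I : Fin m → Finset (Fin k)) :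
    SimpleGraph (DispVert parts I) where
  Adj x y := x ≠ y ∧ G.IsClique (x.verts ∪ y.verts)
  symm := ⟨fun _ _ h => ⟨h.1.symm, Set.union_comm _ _ ▸ h.2⟩⟩
  loopless := ⟨fun _ h => h.1 rfl⟩

@[simp]
theorem product_adj {G : SimpleGraph V} {x y : DispVert parts I} :
    (product G parts I).Adj x y ↔ x ≠ y ∧ G.IsClique (x.verts ∪ y.verts) :=
  Iff.rfl

variable {G : SimpleGraph V}

def restrict (v : Fin k → V) (hv : ∀ j, v j ∈ parts j) (i : Fin m) : DispVert parts I :=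
  ⟨i, fun j => ⟨v j, hv j⟩⟩

theorem verts_restrict_subset (v : Fin k → V) (hv : ∀ j, v j ∈ parts j) (i : Fin m) :
    (restrict (I := I) v hv i).verts ⊆ Set.range v := by
  rintro _ ⟨j, rfl⟩
  exact ⟨j.1, rfl⟩

theorem isClique_range_restrict {v : Fin k → V} (hv : ∀ j, v j ∈ parts j)
    (hG : G.IsClique (Set.range v)) :
    (product G parts I).IsClique (Set.range (restrict v hv)) := by
  rintro _ ⟨i, rfl⟩ _ ⟨i', rfl⟩ hne
  exact product_adj.mpr ⟨hne, hG.subset (Set.union_subset (verts_restrict_subset v hv i)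
    (verts_restrict_subset v hv i'))⟩

theorem fst_ne_of_adj (hindep : ∀ i, ∀ v ∈ parts i, ∀ w ∈ parts i, ¬ G.Adj v w)
    {x y : DispVert parts I} (hxy : (product G parts I).Adj x y) : x.1 ≠ y.1 := by
  rw [product_adj] at hxy
  obtain ⟨i, f⟩ := x
  obtain ⟨i', g⟩ := y
  rintro (rfl : i = i')
  obtain ⟨j, hj⟩ : ∃ j, f j ≠ g j := Function.ne_iff.mp fun hfg => hxy.1 (by rw [hfg])
  exact hindep j.1 _ (f j).2 _ (g j).2 <|
    hxy.2 (Or.inl ⟨j, rfl⟩) (Or.inr ⟨j, rfl⟩) fun h => hj (Subtype.ext h)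

theorem isClique_verts_union_of_one_lt_card {T : Finset (DispVert parts I)}
    (hT : (product G parts I).IsClique T) (hT₁ : 1 < #T) {x y : DispVert parts I}
    (hx : x ∈ T) (hy : y ∈ T) : G.IsClique (x.verts ∪ y.verts) := by
  obtain rfl | hxy := eq_or_ne x y
  · obtain ⟨z, hz, hzx⟩ := exists_mem_ne hT₁ x
    rw [Set.union_self]
    exact (product_adj.mp (hT hx hz hzx.symm)).2.subset Set.subset_union_left
  · exact (product_adj.mp (hT hx hy hxy)).2

variable [DecidableEq V]

def vertsFinset (x : DispVert parts I) : Finset V :=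
  univ.image fun j => (x.2 j).1

@[simp]
theorem coe_vertsFinset (x : DispVert parts I) : (x.vertsFinset : Set V) = x.verts := by
  simp [vertsFinset, verts]

theorem isClique_biUnion_vertsFinset {T : Finset (DispVert parts I)}
    (hT : (product G parts I).IsClique T) (hT₁ : 1 < #T) :
    G.IsClique (T.biUnion vertsFinset : Set V) := by
  intro a ha b hb hab
  simp only [coe_biUnion, coe_vertsFinset, Set.mem_iUnion, mem_coe] at ha hb
  obtain ⟨x, hx, hax⟩ := ha
  obtain ⟨y, hy, hby⟩ := hb
  exact isClique_verts_union_of_one_lt_card hT hT₁ hx hy (Or.inl hax) (Or.inr hby) hab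

/-- For `j ∈ I_i` and a tuple `x ∈ T` of part `i`, the entry `x_j` lies in `V_j`; so the
vertices of `T` meet every such part, and these parts are disjoint. -/
theorem card_biUnion_image_fst_le (hdisj : ∀ i j, i ≠ j → Disjoint (parts i) (parts j))
    (T : Finset (DispVert parts I)) :
    #((T.image Sigma.fst).biUnion I) ≤ #(T.biUnion vertsFinset) := by
  refine card_le_card_of_forall_inter_nonempty (fun i _ j _ => hdisj i j) fun j hj => ?_
  obtain ⟨_, hi, hji⟩ := mem_biUnion.mp hj
  obtain ⟨x, hx, rfl⟩ := mem_image.mp hi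
  have hxj : (x.2 ⟨j, hji⟩).1 ∈ vertsFinset x := mem_image_of_mem _ (mem_univ _)
  exact ⟨_, mem_inter.mpr ⟨mem_biUnion.mpr ⟨x, hx, hxj⟩, (x.2 ⟨j, hji⟩).2⟩⟩

end DispVert

open DispVert in
theorem stmt_5_general {V : Type} [DecidableEq V]
    (G : SimpleGraph V) (k m r s : ℕ)
    (hr : 2 ≤ r)
    (parts : Fin k → Finset V)
    (hdisj : ∀ i j : Fin k, i ≠ j → Disjoint (parts i) (parts j))
    (hindep : ∀ i : Fin k, ∀ v ∈ parts i, ∀ w ∈ parts i, ¬ G.Adj v w)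
    (I : Fin m → Finset (Fin k))
    (hdisperse : ∀ T : Finset (Fin m), T.card = r → s ≤ (T.biUnion I).card)
    (G' : SimpleGraph (DispVert parts I))
    (hG' : ∀ x y : DispVert parts I,
      G'.Adj x y ↔ x ≠ y ∧ G.IsClique (x.verts ∪ y.verts)) :
    ((∃ v : Fin k → V, (∀ i : Fin k, v i ∈ parts i) ∧
        ∀ i j : Fin k, i ≠ j → G.Adj (v i) (v j)) →
      ∃ c : Fin m → DispVert parts I,
        (∀ i : Fin m, (c i).1 = i) ∧ G'.IsClique (Set.range c)) ∧
    ((∃ t : Finset (DispVert parts I), G'.IsClique ↑t ∧ t.card = r) →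
      ∃ t : Finset V, G.IsClique ↑t ∧ s ≤ t.card) := by
  obtain rfl : G' = product G parts I := by
    ext x y
    exact (hG' x y).trans product_adj.symm
  refine ⟨fun ⟨v, hv, hadj⟩ => ⟨restrict v hv, fun _ => rfl, isClique_range_restrict hv ?_⟩,
    fun ⟨T, hT, hTr⟩ =>
      ⟨T.biUnion vertsFinset, isClique_biUnion_vertsFinset hT (by omega), ?_⟩⟩
  · rintro _ ⟨i, rfl⟩ _ ⟨j, rfl⟩ hij
    exact hadj i j (ne_of_apply_ne v hij)
  · have hfst : #(T.image Sigma.fst) = r :=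
      (card_image_of_injOn fun x hx y hy hxy => by_contra fun hne =>
        fst_ne_of_adj hindep (hT hx hy hne) hxy).trans hTr
    exact (hdisperse _ hfst).trans (card_biUnion_image_fst_le hdisj T)

/-- the disperser product of a multipartite clique instance:
completeness (a multicolored `k`-clique yields a multicolored `m`-clique) and
soundness (an `r`-clique yields a clique of size at least `s` in `G`). -/
theorem stmt_5 {V : Type} [Fintype V] [DecidableEq V]
    (G : SimpleGraph V) (k m ℓ r s : ℕ)
    (hk : 0 < k) (hm : 0 < m) (hℓ : 0 < ℓ) (hr : 2 ≤ r) (hs : 0 < s)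
    (parts : Fin k → Finset V)
    (hdisj : ∀ i j : Fin k, i ≠ j → Disjoint (parts i) (parts j))
    (hcover : ∀ v : V, ∃ i : Fin k, v ∈ parts i)
    (hindep : ∀ i : Fin k, ∀ v ∈ parts i, ∀ w ∈ parts i, ¬ G.Adj v w)
    (I : Fin m → Finset (Fin k)) (hIinj : Function.Injective I)
    (hIcard : ∀ i : Fin m, (I i).card = ℓ)
    (hdisperse : ∀ T : Finset (Fin m), T.card = r → s ≤ (T.biUnion I).card)
    (G' : SimpleGraph (DispVert parts I))
    (hG' : ∀ x y : DispVert parts I,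
      G'.Adj x y ↔ x ≠ y ∧ G.IsClique (x.verts ∪ y.verts)) :
    ((∃ v : Fin k → V, (∀ i : Fin k, v i ∈ parts i) ∧
        ∀ i j : Fin k, i ≠ j → G.Adj (v i) (v j)) →
      ∃ c : Fin m → DispVert parts I,
        (∀ i : Fin m, (c i).1 = i) ∧ G'.IsClique (Set.range c)) ∧
    ((∃ t : Finset (DispVert parts I), G'.IsClique ↑t ∧ t.card = r) →
      ∃ t : Finset V, G.IsClique ↑t ∧ s ≤ t.card) :=
  stmt_5_general G k m r s hr parts hdisj hindep I hdisperse G' hG'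
end

section
/- Let G be a simple graph whose vertex set is partitioned into k disjoint parts V_1, …, V_k, each an independent set, and let ε ∈ (0,1) and r be a positive integer. Let I_1, …, I_m ⊆ [k] be subsets, each of size ℓ, such that the union of any r distinct subsets among them has size at least (1 − ε/2)·k. Define a simple graph H whose vertex set is the disjoint union of parts 𝒱_1, …, 𝒱_m, where 𝒱_i consists of all tuples (u_j)_{j ∈ I_i} with u_j ∈ V_j for each j ∈ I_i, and where two distinct tuples are adjacent in H if and only if the set of all G-vertices appearing in the two tuples is a clique in G. Then: (i) if G contains vertices v_1 ∈ V_1, …, v_k ∈ V_k forming a clique of size k, then H contains a clique of size m with exactly one vertex in each part; and (ii) if there exist 2r vertices u_1 ∈ 𝒱_{a_1}, …, u_r ∈ 𝒱_{a_r}, w_1 ∈ 𝒱_{b_1}, …, w_r ∈ 𝒱_{b_r}, where the indices a_1, …, a_r, b_1, …, b_r ∈ [m] are pairwise distinct, such that every u_s is adjacent to every w_t in H, then G contains a clique of size at least (1 − ε)·k. -/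
open Finset

theorem Finset.card_le_card_of_forall_exists_mem_parts {ι α : Type*}
    {parts : ι → Finset α} (hdisj : ∀ i j, i ≠ j → Disjoint (parts i) (parts j))
    {S : Finset ι} {T : Finset α} (hST : ∀ i ∈ S, ∃ v ∈ T, v ∈ parts i) :
    #S ≤ #T := by
  classical
  calc #S ≤ #(S.biUnion fun i => T.filter (· ∈ parts i)) := by
        refine card_le_card_biUnion (fun i _ j _ hij => ?_) fun i hi => ?_
        · exact disjoint_filter_filter' _ _ fun _ hi hj v hv =>
            disjoint_left.1 (hdisj i j hij) (hi v hv) (hj v hv)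
        · obtain ⟨v, hvT, hv⟩ := hST i hi
          exact ⟨v, mem_filter.2 ⟨hvT, hv⟩⟩
    _ ≤ #T := card_le_card (biUnion_subset.2 fun _ _ => filter_subset _ _)

theorem Finset.card_add_card_le_card_inter_add_card {α : Type*} [Fintype α] [DecidableEq α]
    (A B : Finset α) : #A + #B ≤ #(A ∩ B) + Fintype.card α := by
  linarith [card_union_add_card_inter A B, card_le_univ (A ∪ B)]

namespace DispVert

variable {V : Type} {k m : ℕ} {parts : Fin k → Finset V} {I : Fin m → Finset (Fin k)}

def vertsOn [DecidableEq V] (x : DispVert parts I) (S : Finset (Fin k)) : Finset V :=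
  (univ.filter fun j : {j // j ∈ I x.1} => j.1 ∈ S).image fun j => (x.2 j).1

theorem mem_vertsOn [DecidableEq V] {x : DispVert parts I} {S : Finset (Fin k)} {v : V} :
    v ∈ x.vertsOn S ↔ ∃ j : {j // j ∈ I x.1}, j.1 ∈ S ∧ (x.2 j).1 = v := by
  simp [vertsOn]

theorem coe_mem_verts (x : DispVert parts I) (j : {j // j ∈ I x.1}) : (x.2 j).1 ∈ x.verts :=
  ⟨j, rfl⟩

variable {G : SimpleGraph V}

theorem coord_eq_of_isClique_union
    (hindep : ∀ i : Fin k, ∀ v ∈ parts i, ∀ w ∈ parts i, ¬ G.Adj v w)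
    {x y : DispVert parts I} (hxy : G.IsClique (x.verts ∪ y.verts))
    {j : Fin k} (hx : j ∈ I x.1) (hy : j ∈ I y.1) :
    (x.2 ⟨j, hx⟩).1 = (y.2 ⟨j, hy⟩).1 := by
  by_contra hne
  exact hindep j _ (x.2 ⟨j, hx⟩).2 _ (y.2 ⟨j, hy⟩).2
    (hxy (Or.inl (coe_mem_verts x _)) (Or.inr (coe_mem_verts y _)) hne)

theorem exists_isClique_card_inter_le {ι κ : Type*} [Fintype ι] [Fintype κ]
    (hdisj : ∀ i j : Fin k, i ≠ j → Disjoint (parts i) (parts j))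
    (hindep : ∀ i : Fin k, ∀ v ∈ parts i, ∀ w ∈ parts i, ¬ G.Adj v w)
    (u : ι → DispVert parts I) (w : κ → DispVert parts I)
    (huw : ∀ s t, G.IsClique ((u s).verts ∪ (w t).verts)) :
    ∃ T : Finset V, G.IsClique ↑T ∧
      #((univ.biUnion fun s => I (u s).1) ∩ univ.biUnion fun t => I (w t).1) ≤ #T := by
  classical
  set B := univ.biUnion fun t => I (w t).1
  refine ⟨univ.biUnion fun s => (u s).vertsOn B, ?_, ?_⟩
  · intro x hx y hy hxy
    simp only [coe_biUnion, coe_univ, Set.mem_univ, Set.iUnion_true, Set.mem_iUnion,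
      mem_coe, mem_vertsOn] at hx hy
    obtain ⟨s, i, -, rfl⟩ := hx
    obtain ⟨s', j, hjB, rfl⟩ := hy
    obtain ⟨t, -, hjt⟩ := mem_biUnion.1 hjB
    rw [coord_eq_of_isClique_union hindep (huw s' t) j.2 hjt] at hxy ⊢
    exact huw s t (Or.inl (coe_mem_verts _ _)) (Or.inr (coe_mem_verts _ _)) hxy
  · refine card_le_card_of_forall_exists_mem_parts hdisj fun j hj => ?_
    obtain ⟨hjA, hjB⟩ := mem_inter.1 hj
    obtain ⟨s, -, hjs⟩ := mem_biUnion.1 hjA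
    exact ⟨_, mem_biUnion.2 ⟨s, mem_univ _, mem_vertsOn.2 ⟨⟨j, hjs⟩, hjB, rfl⟩⟩,
      ((u s).2 ⟨j, hjs⟩).2⟩

theorem isClique_range_restrict_s6 {H : SimpleGraph (DispVert parts I)}
    (hH : ∀ x y : DispVert parts I, H.Adj x y ↔ x ≠ y ∧ G.IsClique (x.verts ∪ y.verts))
    {v : Fin k → V} (hv : ∀ i, v i ∈ parts i) (hcl : ∀ i j, i ≠ j → G.Adj (v i) (v j)) :
    H.IsClique (Set.range fun i : Fin m => (⟨i, fun j => ⟨v j, hv j⟩⟩ : DispVert parts I)) := by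
  have hrange : G.IsClique (Set.range v) := by
    rintro _ ⟨i, rfl⟩ _ ⟨j, rfl⟩ hne
    exact hcl i j (ne_of_apply_ne v hne)
  rintro _ ⟨i, rfl⟩ _ ⟨i', rfl⟩ hne
  refine (hH _ _).2 ⟨hne, hrange.subset ?_⟩
  rintro _ (⟨j, rfl⟩ | ⟨j, rfl⟩) <;> exact ⟨j.1, rfl⟩

end DispVert

theorem stmt_6_general {V : Type}
    (G : SimpleGraph V) (k m r : ℕ) (ε : ℝ)
    (parts : Fin k → Finset V)
    (hdisj : ∀ i j : Fin k, i ≠ j → Disjoint (parts i) (parts j))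
    (hindep : ∀ i : Fin k, ∀ v ∈ parts i, ∀ w ∈ parts i, ¬ G.Adj v w)
    (I : Fin m → Finset (Fin k))
    (hdisperse : ∀ T : Finset (Fin m), T.card = r →
      ((T.biUnion I).card : ℝ) ≥ (1 - ε / 2) * k)
    (H : SimpleGraph (DispVert parts I))
    (hH : ∀ x y : DispVert parts I,
      H.Adj x y ↔ x ≠ y ∧ G.IsClique (x.verts ∪ y.verts)) :
    ((∃ v : Fin k → V, (∀ i : Fin k, v i ∈ parts i) ∧
        ∀ i j : Fin k, i ≠ j → G.Adj (v i) (v j)) →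
      ∃ c : Fin m → DispVert parts I,
        (∀ i : Fin m, (c i).1 = i) ∧ H.IsClique (Set.range c)) ∧
    ((∃ (a b : Fin r → Fin m) (u w : Fin r → DispVert parts I),
        Function.Injective (Sum.elim a b : Fin r ⊕ Fin r → Fin m) ∧
        (∀ t : Fin r, (u t).1 = a t) ∧ (∀ t : Fin r, (w t).1 = b t) ∧
        ∀ t t' : Fin r, H.Adj (u t) (w t')) →
      ∃ t : Finset V, G.IsClique ↑t ∧ (1 - ε) * k ≤ (t.card : ℝ)) := by
  refine ⟨fun ⟨v, hv, hcl⟩ => ⟨_, fun _ => rfl, DispVert.isClique_range_restrict_s6 hH hv hcl⟩, ?_⟩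
  rintro ⟨a, b, u, w, hinj, hu, hw, hadj⟩
  obtain ⟨T, hT, hcard⟩ := DispVert.exists_isClique_card_inter_le hdisj hindep u w
    fun s t => ((hH _ _).1 (hadj s t)).2
  have hunion : ∀ (c : Fin r → Fin m) (x : Fin r → DispVert parts I), (∀ t, (x t).1 = c t) →
      Function.Injective c → (1 - ε / 2) * k ≤ #(univ.biUnion fun t => I (x t).1) := by
    intro c x hx hc
    simp only [hx, ← image_biUnion]
    exact hdisperse _ (by rw [card_image_of_injective _ hc, card_fin])
  have hA := hunion a u hu (hinj.comp Sum.inl_injective)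
  have hB := hunion b w hw (hinj.comp Sum.inr_injective)
  have hAB : (#(univ.biUnion fun t => I (u t).1) : ℝ) + #(univ.biUnion fun t => I (w t).1) ≤
      #T + k := by
    exact_mod_cast (card_add_card_le_card_inter_add_card _ _).trans
      (by rw [Fintype.card_fin]; exact Nat.add_le_add_right hcard k)
  exact ⟨T, hT, by linarith⟩

/-- the disperser product graph `H`: completeness, and a
multicolored `K_{r,r}` in `H` yields a clique of size at least `(1−ε)k`
in `G`. -/
theorem stmt_6 {V : Type} [Fintype V] [DecidableEq V]
    (G : SimpleGraph V) (k m ℓ r : ℕ) (ε : ℝ)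
    (hk : 0 < k) (hm : 0 < m) (hℓ : 0 < ℓ) (hr : 0 < r) (hε : 0 < ε ∧ ε < 1)
    (parts : Fin k → Finset V)
    (hdisj : ∀ i j : Fin k, i ≠ j → Disjoint (parts i) (parts j))
    (hcover : ∀ v : V, ∃ i : Fin k, v ∈ parts i)
    (hindep : ∀ i : Fin k, ∀ v ∈ parts i, ∀ w ∈ parts i, ¬ G.Adj v w)
    (I : Fin m → Finset (Fin k)) (hIcard : ∀ i : Fin m, (I i).card = ℓ)
    (hdisperse : ∀ T : Finset (Fin m), T.card = r →
      ((T.biUnion I).card : ℝ) ≥ (1 - ε / 2) * k)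
    (H : SimpleGraph (DispVert parts I))
    (hH : ∀ x y : DispVert parts I,
      H.Adj x y ↔ x ≠ y ∧ G.IsClique (x.verts ∪ y.verts)) :
    ((∃ v : Fin k → V, (∀ i : Fin k, v i ∈ parts i) ∧
        ∀ i j : Fin k, i ≠ j → G.Adj (v i) (v j)) →
      ∃ c : Fin m → DispVert parts I,
        (∀ i : Fin m, (c i).1 = i) ∧ H.IsClique (Set.range c)) ∧
    ((∃ (a b : Fin r → Fin m) (u w : Fin r → DispVert parts I),
        Function.Injective (Sum.elim a b : Fin r ⊕ Fin r → Fin m) ∧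
        (∀ t : Fin r, (u t).1 = a t) ∧ (∀ t : Fin r, (w t).1 = b t) ∧
        ∀ t t' : Fin r, H.Adj (u t) (w t')) →
      ∃ t : Finset V, G.IsClique ↑t ∧ (1 - ε) * k ≤ (t.card : ℝ)) :=
  stmt_6_general G k m r ε parts hdisj hindep I hdisperse H hH
end

section
/- Let R be a commutative ring, r a positive integer, d = 2r + 1, and λ₁, λ₂ ∈ R. Define the (d+1)×(d+1) matrix A over R, with rows and columns indexed by 0, …, d, by: for 0 ≤ i ≤ r, A_{ij} = C(j, i)·i!·λ₁^{j−i} if j ≥ i and A_{ij} = 0 otherwise; and for r < i ≤ d, A_{ij} = C(j, i − (r+1))·(i − (r+1))!·λ₂^{j − (i − (r+1))} if j ≥ i − (r+1) and A_{ij} = 0 otherwise. Then det(A) = (λ₂ − λ₁)^{(r+1)²} · ∏_{i=1}^{r} (i!)². -/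
/-!
Up to the factor `k!` in each row, column `j` of the matrix lists the Taylor coefficients of
`X ^ j` at `λ₁` (first `r + 1` rows) and at `λ₂` (last `r + 1` rows). Taylor shifts compose,
`taylor x ∘ taylor y = taylor (x + y)`, so multiplying on the right by the unitriangular matrix of
the shift by `-λ₁` moves the two points to `0` and `μ = λ₂ - λ₁`. The rows at `0` become unit
vectors, which leaves a block-triangular matrix whose remaining block holds the low coefficients of
`(X + μ) ^ (r + 1 + l)`. Splitting `(X + μ) ^ (r + 1 + l) = (X + μ) ^ (r + 1) * (X + μ) ^ l`
factors that block as a lower-triangular matrix with diagonal `μ ^ (r + 1)` times a unitriangular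
one.
-/

open Polynomial Matrix Finset

namespace TwoPointHermite

variable {R : Type*} [CommRing R]

noncomputable def taylorMatrix (m n : ℕ) (x : R) : Matrix (Fin m) (Fin n) R :=
  of fun k j => (taylor x (X ^ (j : ℕ))).coeff k

variable {m n : ℕ}

lemma taylorMatrix_apply (x : R) (k : Fin m) (j : Fin n) :
    taylorMatrix m n x k j = x ^ ((j : ℕ) - k) * ((j : ℕ).choose k : R) := by
  rw [taylorMatrix, of_apply, taylor_X_pow, coeff_X_add_C_pow]

lemma coeff_taylor_eq_sum (x : R) {p : R[X]} (hp : p.natDegree < n) (k : ℕ) :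
    (taylor x p).coeff k = ∑ l : Fin n, p.coeff l * (taylor x (X ^ (l : ℕ))).coeff k := by
  conv_lhs => rw [p.as_sum_range_C_mul_X_pow' hp]
  simp [Fin.sum_univ_eq_sum_range (fun l => p.coeff l * ((X + C x) ^ l).coeff k)]

lemma taylorMatrix_mul_taylorMatrix (x y : R) :
    taylorMatrix m n x * taylorMatrix n n y = taylorMatrix m n (x + y) := by
  ext k j
  have hdeg : (taylor y (X ^ (j : ℕ))).natDegree < n :=
    (natDegree_taylor _ _).trans_lt ((natDegree_X_pow_le _).trans_lt j.isLt)
  simp only [mul_apply, taylorMatrix, of_apply]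
  rw [← taylor_taylor, coeff_taylor_eq_sum x hdeg]
  simp only [mul_comm]

lemma det_taylorMatrix (x : R) : (taylorMatrix n n x).det = 1 := by
  rw [det_of_isUpperTriangular]
  · simp [taylorMatrix_apply]
  · intro k j hjk
    rw [taylorMatrix_apply, Nat.choose_eq_zero_of_lt (by exact hjk), Nat.cast_zero, mul_zero]

lemma coeff_mul_eq_sum (p q : R[X]) (k : Fin n) :
    (p * q).coeff k = ∑ j : Fin n, (if j ≤ k then p.coeff (k - j) else 0) * q.coeff j := by
  have hfilter : (range n).filter (· ≤ (k : ℕ)) = range (k + 1) := by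
    ext j
    simp only [mem_filter, mem_range]
    omega
  simp_rw [Fin.le_iff_val_le_val]
  rw [mul_comm, coeff_mul,
    Nat.sum_antidiagonal_eq_sum_range_succ (fun i j => q.coeff i * p.coeff j),
    Fin.sum_univ_eq_sum_range (fun j => (if j ≤ k then p.coeff (k - j) else 0) * q.coeff j),
    ← hfilter, sum_filter]
  simp only [ite_mul, zero_mul, mul_comm]

lemma det_coeff_taylor_X_pow_add (a b : ℕ) (x : R) :
    (of fun k l : Fin b => (taylor x (X ^ (a + l))).coeff k).det = x ^ (a * b) := by
  have hLU : (of fun k l : Fin b => (taylor x (X ^ (a + l))).coeff k) =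
      (of fun k j : Fin b => if j ≤ k then (taylor x (X ^ a)).coeff (k - j) else 0) *
        taylorMatrix b b x := by
    ext k l
    rw [of_apply, pow_add, taylor_mul, coeff_mul_eq_sum, mul_apply]
    rfl
  rw [hLU, det_mul, det_taylorMatrix, mul_one, det_of_isLowerTriangular]
  · simp [coeff_X_add_C_pow, pow_mul]
  · intro k j hjk
    simp only [of_apply]
    rw [if_neg (not_le.mpr (OrderDual.toDual_lt_toDual.mp hjk))]

theorem det_fromRows_taylorMatrix (a b : ℕ) (x y : R) :
    ((fromRows (taylorMatrix a (a + b) x) (taylorMatrix b (a + b) y)).submatrix id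
      finSumFinEquiv).det = (y - x) ^ (a * b) := by
  set e : Fin a ⊕ Fin b ≃ Fin (a + b) := finSumFinEquiv
  have hshift : fromRows (taylorMatrix a (a + b) x) (taylorMatrix b (a + b) y) *
      taylorMatrix (a + b) (a + b) (-x) =
      fromRows (taylorMatrix a (a + b) 0) (taylorMatrix b (a + b) (y - x)) := by
    rw [fromRows_mul, taylorMatrix_mul_taylorMatrix, taylorMatrix_mul_taylorMatrix,
      add_neg_cancel, ← sub_eq_add_neg]
  have hblocks : (fromRows (taylorMatrix a (a + b) 0)
      (taylorMatrix b (a + b) (y - x))).submatrix id e =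
      fromBlocks 1 0 (taylorMatrix b a (y - x))
        (of fun k l : Fin b => (taylor (y - x) (X ^ (a + l))).coeff k) := by
    ext (k | k) (l | l) <;> simp [e, taylorMatrix, coeff_X_pow, one_apply, Fin.ext_iff]
    omega
  calc _ = ((fromRows (taylorMatrix a (a + b) x) (taylorMatrix b (a + b) y)).submatrix id e *
        (taylorMatrix (a + b) (a + b) (-x)).submatrix e e).det := by
        rw [det_mul, det_submatrix_equiv_self, det_taylorMatrix, mul_one]
    _ = _ := by
        rw [← submatrix_mul _ _ _ _ _ e.bijective, hshift, hblocks, det_fromBlocks_zero₁₂,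
          det_one, one_mul, det_coeff_taylor_X_pow_add]

lemma ite_choose_mul_factorial_mul_pow (x : R) (i j : ℕ) :
    (if i ≤ j then ((j.choose i * i.factorial : ℕ) : R) * x ^ (j - i) else 0) =
      i.factorial * (x ^ (j - i) * j.choose i) := by
  split_ifs with hij
  · push_cast
    ring
  · rw [Nat.choose_eq_zero_of_lt (not_le.mp hij), Nat.cast_zero, mul_zero, mul_zero]

end TwoPointHermite

open TwoPointHermite

theorem stmt_8_general {R : Type} [CommRing R] (r : ℕ) (lam₁ lam₂ : R) :
    (Matrix.of fun i j : Fin (2 * r + 1 + 1) =>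
        if (i : ℕ) ≤ r then
          (if (i : ℕ) ≤ (j : ℕ) then
            ((((j : ℕ).choose (i : ℕ)) * Nat.factorial (i : ℕ) : ℕ) : R)
              * lam₁ ^ ((j : ℕ) - (i : ℕ))
          else 0)
        else
          (if (i : ℕ) - (r + 1) ≤ (j : ℕ) then
            ((((j : ℕ).choose ((i : ℕ) - (r + 1)))
                * Nat.factorial ((i : ℕ) - (r + 1)) : ℕ) : R)
              * lam₂ ^ ((j : ℕ) - ((i : ℕ) - (r + 1)))
          else 0)).det
      = (lam₂ - lam₁) ^ ((r + 1) ^ 2) * ∏ i ∈ Finset.Icc 1 r, ((Nat.factorial i : R)) ^ 2 := by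
  set e : Fin (r + 1) ⊕ Fin (r + 1) ≃ Fin (2 * r + 1 + 1) :=
    finSumFinEquiv.trans (finCongr (by omega))
  set f : Fin (r + 1) → R := fun k => ((k : ℕ).factorial : R)
  have hprod : ∏ k, f k = ∏ i ∈ Icc 1 r, (i.factorial : R) := by
    rw [Fin.prod_univ_eq_prod_range (fun k => (k.factorial : R)),
      prod_range_eq_mul_Ico _ r.succ_pos, Nat.succ_eq_add_one, Ico_add_one_right_eq_Icc,
      Nat.factorial_zero, Nat.cast_one, one_mul]
  calc _ = (of fun i j => Sum.elim f f i *
          (fromRows (taylorMatrix (r + 1) (r + 1 + (r + 1)) lam₁)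
            (taylorMatrix (r + 1) (r + 1 + (r + 1)) lam₂)).submatrix id finSumFinEquiv
            i j).det := by
        rw [← det_submatrix_equiv_self e]
        congr 1
        ext (k | k) j <;>
          simp only [submatrix_apply, of_apply, e, Equiv.trans_apply, finCongr_apply,
            Fin.val_cast, finSumFinEquiv_apply_left, Fin.val_castAdd, finSumFinEquiv_apply_right,
            Fin.val_natAdd, fromRows_apply_inl, fromRows_apply_inr, id, taylorMatrix_apply,
            Sum.elim_inl, Sum.elim_inr, f]
        · rw [if_pos k.is_le, ite_choose_mul_factorial_mul_pow]
        · rw [if_neg (by omega), Nat.add_sub_cancel_left, ite_choose_mul_factorial_mul_pow]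
    _ = _ := by
        rw [det_mul_column, det_fromRows_taylorMatrix, Fintype.prod_sum_type]
        simp only [Sum.elim_inl, Sum.elim_inr, hprod, prod_pow]
        ring

/-- the determinant of the two-point Hermite interpolation matrix
of order `r` (with `d = 2r+1`) equals `(λ₂ − λ₁)^{(r+1)²} · ∏_{i=1}^r (i!)²`. -/
theorem stmt_8 {R : Type} [CommRing R] (r : ℕ) (hr : 0 < r) (lam₁ lam₂ : R) :
    (Matrix.of fun i j : Fin (2 * r + 1 + 1) =>
        if (i : ℕ) ≤ r then
          (if (i : ℕ) ≤ (j : ℕ) then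
            ((((j : ℕ).choose (i : ℕ)) * Nat.factorial (i : ℕ) : ℕ) : R)
              * lam₁ ^ ((j : ℕ) - (i : ℕ))
          else 0)
        else
          (if (i : ℕ) - (r + 1) ≤ (j : ℕ) then
            ((((j : ℕ).choose ((i : ℕ) - (r + 1)))
                * Nat.factorial ((i : ℕ) - (r + 1)) : ℕ) : R)
              * lam₂ ^ ((j : ℕ) - ((i : ℕ) - (r + 1)))
          else 0)).det
      = (lam₂ - lam₁) ^ ((r + 1) ^ 2) * ∏ i ∈ Finset.Icc 1 r, ((Nat.factorial i : R)) ^ 2 :=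
  stmt_8_general r lam₁ lam₂
end

section
/- Let 𝔽 be a finite field and d, m positive integers with |𝔽| > d and C(m+d, d) ≤ |𝔽|^m. Let P denote the 𝔽-vector space of m-variate polynomials over 𝔽 of total degree at most d, and let N = C(m+d, d) (the dimension of P). Then the evaluation map from P to the space of functions 𝔽^m → 𝔽 is injective, and there exist points u_1, …, u_N ∈ 𝔽^m such that the linear map P → 𝔽^N sending p to (p(u_1), …, p(u_N)) is bijective; in particular, for every tuple (a_1, …, a_N) ∈ 𝔽^N there exists a unique m-variate polynomial p of total degree at most d with p(u_i) = a_i for all i ∈ [N]. -/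
/-!
Evaluation on `𝔽^m` is injective on polynomials of total degree `d < |𝔽|`, because such a
polynomial has degree `< |𝔽|` in each variable. So the evaluation functionals at the points of
`𝔽^m` separate the polynomials and hence span the dual of this `N`-dimensional space; any `N` of
them forming a basis of the dual give the interpolation points. The dimension count
`N = C(m+d, d)` comes from adding a slack variable: monomials of degree `≤ d` in `m` variables
correspond to monomials of degree exactly `d` in `m + 1` variables, i.e. to
`Sym (Option (Fin m)) d`.
-/

universe u

open MvPolynomial Module Function

noncomputable def Finsupp.optionSumEqEquivSumLe (σ : Type*) (d : ℕ) :
    {f : Option σ →₀ ℕ // (f.sum fun _ e => e) = d} ≃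
      {f : σ →₀ ℕ // (f.sum fun _ e => e) ≤ d} :=
  have sum_eq (f : Option σ →₀ ℕ) : (f.sum fun _ e => e) = f none + f.some.sum fun _ e => e :=
    f.sum_option_index _ (fun _ => rfl) fun _ _ _ => rfl
  { toFun f := ⟨f.1.some, by have := sum_eq f.1; omega⟩
    invFun f := ⟨f.1.optionElim (d - f.1.sum fun _ e => e), by
      have := f.2
      rw [sum_eq, Finsupp.some_optionElim, Finsupp.optionElim_apply_none]
      omega⟩
    left_inv f := by
      have := sum_eq f.1
      ext1
      change f.1.some.optionElim _ = f.1
      rw [show d - (f.1.some.sum fun _ e => e) = f.1 none by omega]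
      exact Finsupp.optionElim_some f.1
    right_inv f := Subtype.ext (Finsupp.some_optionElim _ _) }

theorem MvPolynomial.finrank_restrictTotalDegree (σ K : Type*) [Fintype σ] [Field K] (d : ℕ) :
    finrank K (restrictTotalDegree σ K d) = (Fintype.card σ + d).choose d := by
  classical
  let e : Sym (Option σ) d ≃ {n : σ →₀ ℕ | (n.sum fun _ e => e) ≤ d} :=
    (Sym.equivNatSum (Option σ) d).trans (Finsupp.optionSumEqEquivSumLe σ d)
  rw [restrictTotalDegree, finrank_eq_nat_card_basis (basisRestrictSupport K _),
    ← Nat.card_congr e, Sym.natCard_sym_eq_choose, Nat.card_eq_fintype_card, Fintype.card_option]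
  congr 1
  omega

theorem MvPolynomial.injective_evalₗ_restrictTotalDegree {σ K : Type u} [Finite σ] [Field K]
    [Fintype K] {d : ℕ} (hd : d < Fintype.card K) :
    Injective ((evalₗ K σ).domRestrict (restrictTotalDegree σ K d)) := by
  refine (injective_iff_map_eq_zero _).mpr fun p hp => Subtype.ext ?_
  refine eq_zero_of_eval_eq_zero _ _ p.1 (fun x => congrFun hp x) ?_
  refine restrictSupport_mono K (fun n hn i => ?_)
    (restrictTotalDegree_le_restrictDegree σ K d p.2)
  exact (hn i).trans (by omega)

theorem LinearMap.exists_fin_bijective_restrict_of_injective {K V X : Type*} [Field K]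
    [AddCommGroup V] [Module K V] [FiniteDimensional K V] (E : V →ₗ[K] X → K)
    (hE : Injective E) {n : ℕ} (hn : finrank K V = n) :
    ∃ u : Fin n → X, Bijective fun v i => E v (u i) := by
  let φ (x : X) : Dual K V := LinearMap.proj x ∘ₗ E
  have hsep (v : V) (hv : ∀ x, φ x v = 0) : v = 0 :=
    (injective_iff_map_eq_zero E).mp hE v (funext hv)
  have hspan : Submodule.span K (Set.range φ) = ⊤ := by
    rw [← Subspace.dualCoannihilator_dualAnnihilator_eq (W := Submodule.span K (Set.range φ)),
      Submodule.dualAnnihilator_eq_top_iff, Submodule.eq_bot_iff]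
    intro v hv
    replace hv : v ∈ ((Submodule.span K (Set.range φ)).dualCoannihilator : Set V) := hv
    rw [Submodule.coe_dualCoannihilator_span] at hv
    exact hsep v fun x => hv (φ x) ⟨x, rfl⟩
  obtain ⟨κ, a, -, hspan', hli⟩ := exists_linearIndependent' K φ
  let b := Basis.mk hli (by rw [hspan', hspan])
  have : Finite κ := Module.Finite.finite_basis b
  obtain ⟨e⟩ : Nonempty (Fin n ≃ κ) := by
    rw [← Finite.card_eq, Nat.card_fin, ← finrank_eq_nat_card_basis b, Subspace.dual_finrank_eq,
      hn]
  refine ⟨a ∘ e, ?_⟩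
  let L : V →ₗ[K] Fin n → K := LinearMap.pi fun i => φ (a (e i))
  have hL : Injective L := by
    refine (injective_iff_map_eq_zero _).mpr fun v hv => ?_
    have : Dual.eval K V v = 0 := b.ext fun j => by
      simpa [b, L] using congrFun hv (e.symm j)
    exact hsep v fun x => LinearMap.congr_fun this (φ x)
  have hrank : finrank K V = finrank K (Fin n → K) := by rw [hn, Module.finrank_fin_fun]
  exact ⟨hL, (LinearMap.injective_iff_surjective_of_finrank_eq_finrank hrank).mp hL⟩

theorem stmt_10_general {𝔽 : Type} [Field 𝔽] [Fintype 𝔽] (d m : ℕ)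
    (hcard : d < Fintype.card 𝔽) :
    (∀ p q : MvPolynomial.restrictTotalDegree (Fin m) 𝔽 d,
      (∀ x : Fin m → 𝔽,
        MvPolynomial.eval x (p : MvPolynomial (Fin m) 𝔽)
          = MvPolynomial.eval x (q : MvPolynomial (Fin m) 𝔽)) → p = q) ∧
    ∃ u : Fin ((m + d).choose d) → (Fin m → 𝔽),
      Function.Bijective
        (fun (p : MvPolynomial.restrictTotalDegree (Fin m) 𝔽 d)
            (i : Fin ((m + d).choose d)) =>
          MvPolynomial.eval (u i) (p : MvPolynomial (Fin m) 𝔽)) ∧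
      ∀ a : Fin ((m + d).choose d) → 𝔽,
        ∃! p : MvPolynomial.restrictTotalDegree (Fin m) 𝔽 d,
          ∀ i, MvPolynomial.eval (u i) (p : MvPolynomial (Fin m) 𝔽) = a i := by
  have hE := injective_evalₗ_restrictTotalDegree (σ := Fin m) hcard
  have hdim : finrank 𝔽 (restrictTotalDegree (Fin m) 𝔽 d) = (m + d).choose d := by
    rw [finrank_restrictTotalDegree, Fintype.card_fin]
  obtain ⟨u, hu⟩ := LinearMap.exists_fin_bijective_restrict_of_injective _ hE hdim
  refine ⟨fun p q hpq => hE (funext hpq), u, hu, fun a => ?_⟩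
  simpa only [funext_iff, LinearMap.domRestrict_apply, evalₗ_apply] using
    hu.existsUnique a

/-- over a finite field `𝔽` with `|𝔽| > d` and
`C(m+d,d) ≤ |𝔽|^m`, the evaluation map on `m`-variate polynomials of total
degree at most `d` is injective, and there are `N = C(m+d,d)` points whose
evaluations determine (bijectively) such polynomials; in particular every
prescribed tuple of values at these points is interpolated by a unique
polynomial of total degree at most `d`. -/
theorem stmt_10 {𝔽 : Type} [Field 𝔽] [Fintype 𝔽] (d m : ℕ) (hd : 0 < d) (hm : 0 < m)
    (hcard : d < Fintype.card 𝔽)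
    (hdim : (m + d).choose d ≤ (Fintype.card 𝔽) ^ m) :
    (∀ p q : MvPolynomial.restrictTotalDegree (Fin m) 𝔽 d,
      (∀ x : Fin m → 𝔽,
        MvPolynomial.eval x (p : MvPolynomial (Fin m) 𝔽)
          = MvPolynomial.eval x (q : MvPolynomial (Fin m) 𝔽)) → p = q) ∧
    ∃ u : Fin ((m + d).choose d) → (Fin m → 𝔽),
      Function.Bijective
        (fun (p : MvPolynomial.restrictTotalDegree (Fin m) 𝔽 d)
            (i : Fin ((m + d).choose d)) =>
          MvPolynomial.eval (u i) (p : MvPolynomial (Fin m) 𝔽)) ∧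
      ∀ a : Fin ((m + d).choose d) → 𝔽,
        ∃! p : MvPolynomial.restrictTotalDegree (Fin m) 𝔽 d,
          ∀ i, MvPolynomial.eval (u i) (p : MvPolynomial (Fin m) 𝔽) = a i :=
  stmt_10_general d m hcard
end

section
/- Let 𝔽 be a finite field, k and ℓ positive integers, x a k×ℓ matrix over 𝔽 with rows x_1, …, x_k ∈ 𝔽^ℓ, f : 𝔽^k → 𝔽^ℓ a function, and δ ∈ [0,1]. Suppose |{a ∈ 𝔽^k : f(a) = xᵀa}| ≥ (1−δ)·|𝔽|^k. Then for every i ∈ [k], |{a ∈ 𝔽^k : f(a + e_i) − f(a) = x_i}| ≥ (1−2δ)·|𝔽|^k, and for all distinct i, j ∈ [k], |{a ∈ 𝔽^k : f(a + e_i + e_j) − f(a) = x_i + x_j}| ≥ (1−2δ)·|𝔽|^k. -/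
/-! If `f` agrees with the additive map `L` on a set `S` of density `1 - δ`, then so does
`a ↦ f (a + v)` on the translate `S - v`. By inclusion–exclusion the two sets meet in density
at least `1 - 2δ`, and on `S ∩ (S - v)` additivity gives `f (a + v) - f a = L v`.
Applied with `L a = xᵀ a` and `v = e_i` or `v = e_i + e_j`, this decodes `x_i` and `x_i + x_j`. -/

theorem Nat.card_subtype_add_card_subtype_le {α : Type*} [Finite α] (P Q : α → Prop) :
    Nat.card {a // P a} + Nat.card {a // Q a} ≤ Nat.card α + Nat.card {a // P a ∧ Q a} := by
  have hunion := Set.ncard_union_add_ncard_inter {a | P a} {a | Q a}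
  rw [← Nat.card_coe_set_eq, ← Nat.card_coe_set_eq, ← Nat.card_coe_set_eq] at hunion
  exact hunion ▸ Nat.add_le_add_right (Set.ncard_le_card _) _

theorem Nat.card_subtype_add_right {G : Type*} [AddGroup G] (P : G → Prop) (v : G) :
    Nat.card {a // P (a + v)} = Nat.card {a // P a} :=
  Nat.card_congr (Equiv.subtypeEquiv (Equiv.addRight v) fun _ => Iff.rfl)

section Decoding

variable {G H : Type*} [AddGroup G] [Finite G] [AddCommGroup H]

theorem two_mul_card_eq_addMonoidHom_le (L : G →+ H) (f : G → H) (v : G) :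
    2 * Nat.card {a // f a = L a} ≤ Nat.card G + Nat.card {a // f (a + v) - f a = L v} := by
  have hboth : Nat.card {a // f a = L a ∧ f (a + v) = L (a + v)}
      ≤ Nat.card {a // f (a + v) - f a = L v} :=
    Nat.card_mono (Set.toFinite _) fun a ⟨ha, hav⟩ => show f (a + v) - f a = L v by
      rw [hav, ha, map_add, add_sub_cancel_left]
  have hunion := Nat.card_subtype_add_card_subtype_le (fun a => f a = L a)
    (fun a => f (a + v) = L (a + v))
  rw [Nat.card_subtype_add_right (fun a => f a = L a) v] at hunion
  omega

theorem card_sub_eq_addMonoidHom_ge (L : G →+ H) (f : G → H) (v : G) {δ : ℝ}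
    (hf : (Nat.card {a // f a = L a} : ℝ) ≥ (1 - δ) * Nat.card G) :
    (Nat.card {a // f (a + v) - f a = L v} : ℝ) ≥ (1 - 2 * δ) * Nat.card G := by
  have h : (2 * Nat.card {a // f a = L a} : ℝ)
      ≤ Nat.card G + Nat.card {a // f (a + v) - f a = L v} := by
    exact_mod_cast two_mul_card_eq_addMonoidHom_le L f v
  linarith

end Decoding

theorem stmt_11_general {𝔽 : Type} [Field 𝔽] [Fintype 𝔽]
    (k ℓ : ℕ)
    (x : Matrix (Fin k) (Fin ℓ) 𝔽) (f : (Fin k → 𝔽) → (Fin ℓ → 𝔽))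
    (δ : ℝ)
    (hf : (Nat.card {a : Fin k → 𝔽 // f a = x.transpose.mulVec a} : ℝ)
        ≥ (1 - δ) * (Fintype.card 𝔽) ^ k) :
    (∀ i : Fin k,
      (Nat.card {a : Fin k → 𝔽 // f (a + Pi.single i 1) - f a = x i} : ℝ)
        ≥ (1 - 2 * δ) * (Fintype.card 𝔽) ^ k) ∧
    (∀ i j : Fin k, i ≠ j →
      (Nat.card {a : Fin k → 𝔽 //
          f (a + Pi.single i 1 + Pi.single j 1) - f a = x i + x j} : ℝ)
        ≥ (1 - 2 * δ) * (Fintype.card 𝔽) ^ k) := by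
  obtain ⟨L, hLx⟩ : ∃ L : (Fin k → 𝔽) →+ (Fin ℓ → 𝔽), ∀ a, L a = x.transpose.mulVec a :=
    ⟨(Matrix.mulVecLin x.transpose).toAddMonoidHom, fun _ => rfl⟩
  have hL (i : Fin k) : L (Pi.single i 1) = x i := by
    rw [hLx, Matrix.mulVec_single_one]
    rfl
  have hcard : (Nat.card (Fin k → 𝔽) : ℝ) = (Fintype.card 𝔽 : ℝ) ^ k := by
    simp [Nat.card_eq_fintype_card]
  simp only [← hLx, ← hcard] at hf ⊢
  have hdecode (v : Fin k → 𝔽) := card_sub_eq_addMonoidHom_ge L f v hf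
  refine ⟨fun i => ?_, fun i j _ => ?_⟩
  · simpa only [hL] using hdecode (Pi.single i 1)
  · have h := hdecode (Pi.single i 1 + Pi.single j 1)
    rw [map_add, hL, hL] at h
    simpa only [add_assoc] using h

/-- local decodability of the parallel Hadamard code. If
`f : 𝔽^k → 𝔽^ℓ` agrees with `a ↦ xᵀa` on at least a `(1−δ)` fraction of
points, then each row `x_i` (and each sum `x_i + x_j`) can be decoded at
a `(1−2δ)` fraction of points. -/
theorem stmt_11 {𝔽 : Type} [Field 𝔽] [Fintype 𝔽]
    (k ℓ : ℕ) (hk : 0 < k) (hℓ : 0 < ℓ)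
    (x : Matrix (Fin k) (Fin ℓ) 𝔽) (f : (Fin k → 𝔽) → (Fin ℓ → 𝔽))
    (δ : ℝ) (hδ : 0 ≤ δ ∧ δ ≤ 1)
    (hf : (Nat.card {a : Fin k → 𝔽 // f a = x.transpose.mulVec a} : ℝ)
        ≥ (1 - δ) * (Fintype.card 𝔽) ^ k) :
    (∀ i : Fin k,
      (Nat.card {a : Fin k → 𝔽 // f (a + Pi.single i 1) - f a = x i} : ℝ)
        ≥ (1 - 2 * δ) * (Fintype.card 𝔽) ^ k) ∧
    (∀ i j : Fin k, i ≠ j →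
      (Nat.card {a : Fin k → 𝔽 //
          f (a + Pi.single i 1 + Pi.single j 1) - f a = x i + x j} : ℝ)
        ≥ (1 - 2 * δ) * (Fintype.card 𝔽) ^ k) :=
  stmt_11_general k ℓ x f δ hf
end

section
/- Let 𝔽 be a finite field and d, m, t positive integers. Let f : 𝔽^m → 𝔽^t be a function, let P be any degree-d line assignment, and let g be any majority function for (f, P). Then Δ(f, g) ≤ 2·δ_P(f). -/
/-- `f` is a degree-`d` polynomial tuple: each coordinate function is the
evaluation of an `m`-variate polynomial of total degree at most `d`. -/
def IsPolyTuple {𝔽 : Type} [CommSemiring 𝔽] (d m t : ℕ)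
    (f : (Fin m → 𝔽) → Fin t → 𝔽) : Prop :=
  ∀ j : Fin t, ∃ p : MvPolynomial (Fin m) 𝔽,
    p.totalDegree ≤ d ∧ ∀ x : Fin m → 𝔽, f x j = MvPolynomial.eval x p

/-- The fraction of points of `𝔽^m` on which `f` and `g` differ. -/
noncomputable def distFn {𝔽 : Type} [Fintype 𝔽] {m t : ℕ}
    (f g : (Fin m → 𝔽) → Fin t → 𝔽) : ℝ :=
  (Nat.card {x : Fin m → 𝔽 // f x ≠ g x} : ℝ) / (Fintype.card 𝔽) ^ m

/-- The line `ℓ(x,h) = {x + λh : λ ∈ 𝔽}`. -/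
def lineSet {𝔽 : Type} [Field 𝔽] {m : ℕ} (x h : Fin m → 𝔽) : Set (Fin m → 𝔽) :=
  {y | ∃ lam : 𝔽, y = x + lam • h}

/-- `Q` restricted to the line `ℓ(x,h)` is (a tuple of) univariate polynomials
of degree at most `d` in the parameter `λ`. -/
def IsDegLine {𝔽 : Type} [Field 𝔽] (d : ℕ) {m t : ℕ} (x h : Fin m → 𝔽)
    (Q : (Fin m → 𝔽) → Fin t → 𝔽) : Prop :=
  ∃ p : Fin t → Polynomial 𝔽, (∀ j : Fin t, (p j).natDegree ≤ d) ∧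
    ∀ lam : 𝔽, Q (x + lam • h) = fun j => Polynomial.eval lam (p j)

/-- A degree-`d` line assignment: to every pair `(x,h)` it assigns a function
which is a degree-`d` polynomial tuple along `ℓ(x,h)`, consistently for pairs
describing the same line. -/
def IsLineAssignment {𝔽 : Type} [Field 𝔽] (d : ℕ) {m t : ℕ}
    (P : (Fin m → 𝔽) → (Fin m → 𝔽) → (Fin m → 𝔽) → Fin t → 𝔽) : Prop :=
  (∀ x h : Fin m → 𝔽, IsDegLine d x h (P x h)) ∧
  (∀ x h x' h' : Fin m → 𝔽, lineSet x h = lineSet x' h' → P x h = P x' h')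

/-- `δ_P(f)`: the fraction of pairs `(x,h)` with `f(x) ≠ P_{x,h}(x)`. -/
noncomputable def deltaP {𝔽 : Type} [Fintype 𝔽] {m t : ℕ}
    (P : (Fin m → 𝔽) → (Fin m → 𝔽) → (Fin m → 𝔽) → Fin t → 𝔽)
    (f : (Fin m → 𝔽) → Fin t → 𝔽) : ℝ :=
  (Nat.card {xh : (Fin m → 𝔽) × (Fin m → 𝔽) // f xh.1 ≠ P xh.1 xh.2 xh.1} : ℝ)
    / ((Fintype.card 𝔽) ^ m * (Fintype.card 𝔽) ^ m)

/-- `g` is a majority function for `(f, P)`: at every point `x`, `g x` is a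
most frequent value among `{P_{x,h}(x) : h ∈ 𝔽^m}`. -/
def IsMajority {𝔽 : Type} [Fintype 𝔽] {m t : ℕ}
    (P : (Fin m → 𝔽) → (Fin m → 𝔽) → (Fin m → 𝔽) → Fin t → 𝔽)
    (g : (Fin m → 𝔽) → Fin t → 𝔽) : Prop :=
  ∀ x : Fin m → 𝔽, ∀ v : Fin t → 𝔽,
    Nat.card {h : Fin m → 𝔽 // P x h x = v}
      ≤ Nat.card {h : Fin m → 𝔽 // P x h x = g x}

/-- `P` is optimal for `f`: on every line, the number of disagreements of
`P_{x,h}` with `f` is minimal among functions that are degree-`d` along the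
line. -/
def IsOptimal {𝔽 : Type} [Field 𝔽] [Fintype 𝔽] (d : ℕ) {m t : ℕ}
    (P : (Fin m → 𝔽) → (Fin m → 𝔽) → (Fin m → 𝔽) → Fin t → 𝔽)
    (f : (Fin m → 𝔽) → Fin t → 𝔽) : Prop :=
  ∀ x h : Fin m → 𝔽, ∀ Q : (Fin m → 𝔽) → Fin t → 𝔽, IsDegLine d x h Q →
    Nat.card {lam : 𝔽 // P x h (x + lam • h) ≠ f (x + lam • h)}
      ≤ Nat.card {lam : 𝔽 // Q (x + lam • h) ≠ f (x + lam • h)}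

/-! If `f x ≠ g x`, every direction `h` with `P_{x,h}(x) = g x` witnesses a disagreement with
`f x`, and by the majority property these directions are at least as many as those with
`P_{x,h}(x) = f x`. Hence at least half of all directions witness a disagreement at `x`;
summing over the points where `f` and `g` differ gives the bound. -/

theorem Nat.card_le_two_mul_card_ne_of_card_le {α β : Type*} [Finite α] (φ : α → β) {a b : β}
    (hab : a ≠ b) (h : Nat.card {x // φ x = a} ≤ Nat.card {x // φ x = b}) :
    Nat.card α ≤ 2 * Nat.card {x // φ x ≠ a} := by
  classical
  have hsplit : Nat.card {x // φ x = a} + Nat.card {x // φ x ≠ a} = Nat.card α := by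
    rw [← Nat.card_sum, Nat.card_congr (Equiv.sumCompl _)]
  have hb : Nat.card {x // φ x = b} ≤ Nat.card {x // φ x ≠ a} :=
    Nat.card_le_card_of_injective _
      (Subtype.impEmbedding _ _ fun x hx => hx ▸ hab.symm).injective
  omega

theorem card_ne_majority_mul_card_le {α β γ : Type*} [Fintype α] [Finite β] (f g : α → γ)
    (P : α → β → γ) (hg : ∀ x v, Nat.card {y // P x y = v} ≤ Nat.card {y // P x y = g x}) :
    Nat.card {x // f x ≠ g x} * Nat.card β ≤
      2 * Nat.card {xy : α × β // f xy.1 ≠ P xy.1 xy.2} := by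
  classical
  rw [Nat.card_congr (Equiv.subtypeProdEquivSigmaSubtype fun x y => f x ≠ P x y), Nat.card_sigma,
    Finset.mul_sum, Nat.card_eq_fintype_card (α := {x // _}), Fintype.card_subtype, ← smul_eq_mul]
  calc _ ≤ ∑ x ∈ Finset.univ.filter (fun x => f x ≠ g x), 2 * Nat.card {y // f x ≠ P x y} :=
        Finset.card_nsmul_le_sum _ _ _ fun x hx => by
          rw [Nat.card_congr (Equiv.subtypeEquivRight fun _ => ne_comm)]
          exact Nat.card_le_two_mul_card_ne_of_card_le (P x) (Finset.mem_filter.mp hx).2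
            (hg x (f x))
    _ ≤ _ := Finset.sum_le_sum_of_subset (Finset.filter_subset _ _)

theorem stmt_14_general {𝔽 : Type} [Field 𝔽] [Fintype 𝔽] (m t : ℕ)
    (f : (Fin m → 𝔽) → Fin t → 𝔽)
    (P : (Fin m → 𝔽) → (Fin m → 𝔽) → (Fin m → 𝔽) → Fin t → 𝔽)
    (g : (Fin m → 𝔽) → Fin t → 𝔽) (hg : IsMajority P g) :
    distFn f g ≤ 2 * deltaP P f := by
  have key := card_ne_majority_mul_card_le f g (fun x h => P x h x) hg
  rw [Nat.card_fun, Nat.card_fin, Nat.card_eq_fintype_card (α := 𝔽)] at key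
  have hN : (0 : ℝ) < Fintype.card 𝔽 ^ m := by positivity
  rw [distFn, deltaP, div_le_iff₀ hN, mul_div_assoc', div_mul_eq_mul_div,
    mul_div_mul_right _ _ hN.ne', le_div_iff₀ hN]
  exact_mod_cast key

/-- any majority function `g` for `(f, P)` satisfies
`Δ(f, g) ≤ 2·δ_P(f)`. -/
theorem stmt_14 {𝔽 : Type} [Field 𝔽] [Fintype 𝔽] (d m t : ℕ)
    (hd : 0 < d) (hm : 0 < m) (ht : 0 < t)
    (f : (Fin m → 𝔽) → Fin t → 𝔽)
    (P : (Fin m → 𝔽) → (Fin m → 𝔽) → (Fin m → 𝔽) → Fin t → 𝔽)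
    (hP : IsLineAssignment d P)
    (g : (Fin m → 𝔽) → Fin t → 𝔽) (hg : IsMajority P g) :
    distFn f g ≤ 2 * deltaP P f :=
  stmt_14_general m t f P g hg
end

section
/- Let 𝔽 be a finite field and d, m, t positive integers with |𝔽| > max(3d, 9216). Let f : 𝔽^m → 𝔽^t be a function and let P be a degree-d line assignment that is optimal for f. If there exists a degree-d polynomial tuple f̃ with Δ(f, f̃) ≤ 1/12, then every majority function g for (f, P) equals f̃. -/
/-!
Fix `x`. On a line `ℓ(x,h)`, optimality makes `P_{x,h}` disagree with `f` at most as often as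
`f̃` does, so `P_{x,h}` and `f̃` differ on at most twice as many points of the line as `f` and `f̃`.
Two distinct degree-`d` restrictions differ on at least `|𝔽| - d` points of the line, so whenever
`f` and `f̃` differ on fewer than `(|𝔽| - d)/2` of them, `P_{x,h}(x) = f̃(x)`. Summing over `h`,
every `y ≠ x` is met by exactly `|𝔽| - 1` pairs `(h, λ ≠ 0)` with `x + λh = y`, so the total number
of disagreements is at most `|𝔽|^m (1 + (|𝔽| - 1)/12)`, and Markov's inequality leaves fewer than
half of the directions bad. Hence `f̃(x)` is the value of `P_{x,h}(x)` for more than half of all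
`h`, so it is the only majority value.
-/

open Finset Polynomial

namespace MvPolynomial

variable {R σ : Type*} [CommRing R]

theorem natDegree_aeval_le_totalDegree_mul (p : MvPolynomial σ R) {φ : σ → R[X]} {k : ℕ}
    (hφ : ∀ i, (φ i).natDegree ≤ k) : (aeval φ p).natDegree ≤ p.totalDegree * k := by
  conv_lhs => rw [p.as_sum]
  rw [map_sum]
  refine natDegree_sum_le_of_forall_le _ _ fun s hs => ?_
  rw [aeval_monomial, Polynomial.algebraMap_eq]
  refine (natDegree_C_mul_le _ _).trans <| (natDegree_prod_le _ _).trans ?_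
  calc ∑ i ∈ s.support, (φ i ^ s i).natDegree
      ≤ ∑ i ∈ s.support, s i * k := sum_le_sum fun i _ =>
        natDegree_pow_le.trans (Nat.mul_le_mul_left _ (hφ i))
    _ = (s.sum fun _ e => e) * k := by rw [Finsupp.sum, sum_mul]
    _ ≤ p.totalDegree * k := Nat.mul_le_mul_right _ (le_totalDegree hs)

theorem polynomial_eval_aeval (p : MvPolynomial σ R) (φ : σ → R[X]) (a : R) :
    (aeval φ p).eval a = eval (fun i => (φ i).eval a) p := by
  rw [aeval_def, polynomial_eval_eval₂]
  congr 1
  ext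
  simp

end MvPolynomial

theorem Polynomial.card_le_hammingDist_eval_add {R : Type*} [CommRing R] [IsDomain R]
    [Fintype R] [DecidableEq R] {p₁ p₂ : R[X]} {d : ℕ} (h₁ : p₁.natDegree ≤ d)
    (h₂ : p₂.natDegree ≤ d) (hne : p₁ ≠ p₂) :
    Fintype.card R ≤ hammingDist (fun a => p₁.eval a) (fun a => p₂.eval a) + d := by
  set agree := ({a | p₁.eval a = p₂.eval a} : Finset R)
  have hagree : #agree ≤ d := by
    by_contra! hlt
    refine hne (eq_of_degrees_lt_of_eval_finset_eq agree ?_ ?_ fun a ha => (mem_filter.1 ha).2)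
      <;> exact (degree_le_of_natDegree_le ‹_›).trans_lt (by exact_mod_cast hlt)
  have hsplit : #agree + #{a | ¬p₁.eval a = p₂.eval a} = Fintype.card R :=
    card_filter_add_card_filter_not _
  simp only [hammingDist, ne_eq]
  omega

theorem IsPolyTuple.isDegLine {𝔽 : Type} [Field 𝔽] {d m t : ℕ} {f : (Fin m → 𝔽) → Fin t → 𝔽}
    (hf : IsPolyTuple d m t f) (x h : Fin m → 𝔽) : IsDegLine d x h f := by
  choose p hdeg heval using hf
  let line : Fin m → 𝔽[X] := fun i => C (h i) * X + C (x i)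
  refine ⟨fun j => MvPolynomial.aeval line (p j), fun j => ?_, fun lam => funext fun j => ?_⟩
  · calc (MvPolynomial.aeval line (p j)).natDegree ≤ (p j).totalDegree * 1 :=
          MvPolynomial.natDegree_aeval_le_totalDegree_mul _ fun _ => natDegree_linear_le
      _ ≤ d := by simpa using hdeg j
  · rw [MvPolynomial.polynomial_eval_aeval, heval]
    congr 2
    funext i
    simp only [line, eval_add, eval_mul, eval_C, eval_X, Pi.add_apply, Pi.smul_apply, smul_eq_mul]
    ring

theorem natCard_ne_eq_hammingDist {ι β : Type*} [Fintype ι] [DecidableEq β] (a b : ι → β) :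
    Nat.card {i // a i ≠ b i} = hammingDist a b := by
  rw [Nat.card_eq_fintype_card, Fintype.card_subtype]
  rfl

theorem hammingDist_comp_equiv {ι ι' β : Type*} [Fintype ι] [Fintype ι'] [DecidableEq β]
    (a b : ι → β) (e : ι' ≃ ι) : hammingDist (a ∘ e) (b ∘ e) = hammingDist a b :=
  card_equiv e fun i => by simp

theorem eq_of_lt_two_mul_card_fiber {α β : Type*} [Fintype α] [DecidableEq β] {φ : α → β}
    {v w : β} (hv : Fintype.card α < 2 * #{a | φ a = v})
    (hw : #{a | φ a = v} ≤ #{a | φ a = w}) : w = v := by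
  classical
  by_contra hne
  have hdisj : Disjoint (α := Finset α) {a | φ a = v} {a | φ a = w} :=
    disjoint_filter.2 fun a _ hv hw => hne (hw.symm.trans hv)
  have := (card_union_of_disjoint hdisj).symm.trans_le (card_le_univ _)
  omega

section Lines

variable {𝔽 V β : Type*} [Field 𝔽] [Fintype 𝔽] [AddCommGroup V] [Module 𝔽 V] [DecidableEq β]

variable (𝔽) in
def lineDist (f g : V → β) (x h : V) : ℕ :=
  hammingDist (fun lam : 𝔽 => f (x + lam • h)) (fun lam : 𝔽 => g (x + lam • h))

variable [Fintype V]

theorem sum_lineDist_le (f g : V → β) (x : V) :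
    ∑ h : V, lineDist 𝔽 f g x h ≤ Fintype.card V + (Fintype.card 𝔽 - 1) * hammingDist f g := by
  classical
  have hline : ∀ lam ∈ univ.erase (0 : 𝔽),
      #{h : V | f (x + lam • h) ≠ g (x + lam • h)} = hammingDist f g := fun lam hlam =>
    hammingDist_comp_equiv f g
      ((MulAction.toPerm (Units.mk0 lam (ne_of_mem_erase hlam))).trans (Equiv.addLeft x))
  calc ∑ h : V, lineDist 𝔽 f g x h
      = ∑ lam : 𝔽, #{h : V | f (x + lam • h) ≠ g (x + lam • h)} := by
        simp only [lineDist, hammingDist, card_filter]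
        exact sum_comm
    _ = #{h : V | f (x + (0 : 𝔽) • h) ≠ g (x + (0 : 𝔽) • h)}
          + ∑ lam ∈ univ.erase 0, #{h : V | f (x + lam • h) ≠ g (x + lam • h)} :=
        (add_sum_erase _ _ (mem_univ 0)).symm
    _ ≤ Fintype.card V + (Fintype.card 𝔽 - 1) * hammingDist f g := by
        rw [sum_congr rfl hline, sum_const, card_erase_of_mem (mem_univ 0), card_univ, smul_eq_mul]
        exact Nat.add_le_add_right (card_le_univ _) _

theorem two_mul_card_bad_directions_lt {f g : V → β} (x : V) {d : ℕ}
    (hd : 3 * d < Fintype.card 𝔽) (hq : 11 < Fintype.card 𝔽)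
    (hfg : 12 * hammingDist f g ≤ Fintype.card V) :
    2 * #{h : V | Fintype.card 𝔽 ≤ 2 * lineDist 𝔽 f g x h + d} < Fintype.card V := by
  set q := Fintype.card 𝔽
  set bad := ({h : V | q ≤ 2 * lineDist 𝔽 f g x h + d} : Finset V)
  have markov : #bad * q ≤ 2 * ∑ h, lineDist 𝔽 f g x h + #bad * d :=
    calc #bad * q = ∑ _h ∈ bad, q := by rw [sum_const, smul_eq_mul]
      _ ≤ ∑ h ∈ bad, (2 * lineDist 𝔽 f g x h + d) := sum_le_sum fun h hh => (mem_filter.1 hh).2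
      _ = 2 * ∑ h ∈ bad, lineDist 𝔽 f g x h + #bad * d := by
          rw [sum_add_distrib, ← mul_sum, sum_const, smul_eq_mul]
      _ ≤ 2 * ∑ h, lineDist 𝔽 f g x h + #bad * d := by
          gcongr
          exact subset_univ bad
  have hsum : ∑ h, lineDist 𝔽 f g x h ≤ Fintype.card V + (q - 1) * hammingDist f g :=
    sum_lineDist_le f g x
  have hV : 0 < Fintype.card V := Fintype.card_pos
  -- As `q - d > 2q/3`, Markov gives `#bad < (3/q) |V| (1 + (q - 1)/12) ≤ |V|/2` for `q ≥ 11`.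
  by_contra! hbig
  zify [show 1 ≤ q by omega] at *
  nlinarith [mul_le_mul_of_nonneg_left hbig (by positivity : (0 : ℤ) ≤ q),
    mul_le_mul_of_nonneg_left hfg (by omega : (0 : ℤ) ≤ q - 1),
    mul_le_mul_of_nonneg_left hd.le (by positivity : (0 : ℤ) ≤ #bad),
    mul_lt_mul_of_pos_left hq hV]

end Lines

theorem IsDegLine.card_le_lineDist_add {𝔽 : Type} [Field 𝔽] [Fintype 𝔽] [DecidableEq 𝔽]
    {d m t : ℕ} {x h : Fin m → 𝔽} {Q₁ Q₂ : (Fin m → 𝔽) → Fin t → 𝔽}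
    (h₁ : IsDegLine d x h Q₁) (h₂ : IsDegLine d x h Q₂) (hne : Q₁ x ≠ Q₂ x) :
    Fintype.card 𝔽 ≤ lineDist 𝔽 Q₁ Q₂ x h + d := by
  obtain ⟨p₁, hdeg₁, heval₁⟩ := h₁
  obtain ⟨p₂, hdeg₂, heval₂⟩ := h₂
  obtain ⟨j, hj⟩ : ∃ j, p₁ j ≠ p₂ j := by
    by_contra! heq
    have e₁ := heval₁ 0
    have e₂ := heval₂ 0
    simp only [zero_smul, add_zero, heq] at e₁ e₂
    exact hne (e₁.trans e₂.symm)
  calc Fintype.card 𝔽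
      ≤ hammingDist (fun lam => (p₁ j).eval lam) (fun lam => (p₂ j).eval lam) + d :=
        card_le_hammingDist_eval_add (hdeg₁ j) (hdeg₂ j) hj
    _ ≤ lineDist 𝔽 Q₁ Q₂ x h + d := by
        gcongr
        simp only [lineDist, heval₁, heval₂]
        exact hammingDist_comp_le_hammingDist (fun _ v => v j)
          (x := fun lam j => (p₁ j).eval lam) (y := fun lam j => (p₂ j).eval lam)

theorem IsOptimal.apply_self_eq_of_two_mul_lineDist_add_lt {𝔽 : Type} [Field 𝔽] [Fintype 𝔽]
    [DecidableEq 𝔽] {d m t : ℕ} {P : (Fin m → 𝔽) → (Fin m → 𝔽) → (Fin m → 𝔽) → Fin t → 𝔽}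
    {f ftilde : (Fin m → 𝔽) → Fin t → 𝔽} {x h : Fin m → 𝔽} (hopt : IsOptimal d P f)
    (hP : IsDegLine d x h (P x h)) (hft : IsPolyTuple d m t ftilde)
    (hlt : 2 * lineDist 𝔽 f ftilde x h + d < Fintype.card 𝔽) :
    P x h x = ftilde x := by
  have hPf : lineDist 𝔽 (P x h) f x h ≤ lineDist 𝔽 f ftilde x h := by
    have := hopt x h ftilde (hft.isDegLine x h)
    rw [natCard_ne_eq_hammingDist, natCard_ne_eq_hammingDist] at this
    exact this.trans_eq (hammingDist_comm _ _)
  by_contra hne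
  have := calc Fintype.card 𝔽
      ≤ lineDist 𝔽 (P x h) ftilde x h + d := hP.card_le_lineDist_add (hft.isDegLine x h) hne
    _ ≤ lineDist 𝔽 (P x h) f x h + lineDist 𝔽 f ftilde x h + d := by
        gcongr
        exact hammingDist_triangle _ _ _
  omega

theorem stmt_15_general {𝔽 : Type} [Field 𝔽] [Fintype 𝔽] (d m t : ℕ)
    (hF : max (3 * d) 9216 < Fintype.card 𝔽)
    (f : (Fin m → 𝔽) → Fin t → 𝔽)
    (P : (Fin m → 𝔽) → (Fin m → 𝔽) → (Fin m → 𝔽) → Fin t → 𝔽)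
    (hP : IsLineAssignment d P) (hopt : IsOptimal d P f)
    (ftilde : (Fin m → 𝔽) → Fin t → 𝔽)
    (hft : IsPolyTuple d m t ftilde) (hclose : distFn f ftilde ≤ 1 / 12) :
    ∀ g : (Fin m → 𝔽) → Fin t → 𝔽, IsMajority P g → g = ftilde := by
  classical
  intro g hg
  funext x
  rw [max_lt_iff] at hF
  have hcloseNat : 12 * hammingDist f ftilde ≤ Fintype.card (Fin m → 𝔽) := by
    rw [distFn, natCard_ne_eq_hammingDist, div_le_iff₀ (by positivity)] at hclose
    have : (12 * hammingDist f ftilde : ℝ) ≤ Fintype.card 𝔽 ^ m := by linarith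
    simpa using (by exact_mod_cast this : 12 * hammingDist f ftilde ≤ Fintype.card 𝔽 ^ m)
  have hbad := two_mul_card_bad_directions_lt (𝔽 := 𝔽) (d := d) x (by omega) (by omega) hcloseNat
  have hgood : #{h | ¬Fintype.card 𝔽 ≤ 2 * lineDist 𝔽 f ftilde x h + d}
      ≤ #{h | P x h x = ftilde x} :=
    card_le_card <| monotone_filter_right _ fun h _ hh =>
      hopt.apply_self_eq_of_two_mul_lineDist_add_lt (hP.1 x h) hft (not_le.1 hh)
  have hsplit := card_filter_add_card_filter_not (s := univ)
    fun h => Fintype.card 𝔽 ≤ 2 * lineDist 𝔽 f ftilde x h + d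
  have hmaj := hg x (ftilde x)
  simp only [Nat.card_eq_fintype_card, Fintype.card_subtype] at hmaj
  rw [card_univ] at hsplit
  exact eq_of_lt_two_mul_card_fiber (by omega) hmaj

/-- if `P` is a degree-`d` line assignment optimal for `f` and
`f` is `1/12`-close to a degree-`d` polynomial tuple `f̃`, then every majority
function for `(f, P)` equals `f̃`. -/
theorem stmt_15 {𝔽 : Type} [Field 𝔽] [Fintype 𝔽] (d m t : ℕ)
    (hd : 0 < d) (hm : 0 < m) (ht : 0 < t)
    (hF : max (3 * d) 9216 < Fintype.card 𝔽)
    (f : (Fin m → 𝔽) → Fin t → 𝔽)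
    (P : (Fin m → 𝔽) → (Fin m → 𝔽) → (Fin m → 𝔽) → Fin t → 𝔽)
    (hP : IsLineAssignment d P) (hopt : IsOptimal d P f)
    (ftilde : (Fin m → 𝔽) → Fin t → 𝔽)
    (hft : IsPolyTuple d m t ftilde) (hclose : distFn f ftilde ≤ 1 / 12) :
    ∀ g : (Fin m → 𝔽) → Fin t → 𝔽, IsMajority P g → g = ftilde :=
  stmt_15_general d m t hF f P hP hopt ftilde hft hclose
end
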